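/- arXiv:1610.05683 — 7 statements merged into one kernel-verified Lean document; each statement's English description precedes it below -/
import Mathlib

section
/- Let f : ℝ → ℝ be measurable with z ↦ f(z)·q(z) Lebesgue integrable. Then ∫ f(h(ε))·s(ε)·q(h(ε))/r(h(ε)) dε = ∫ f(z)·q(z) dz, where both integrals are over ℝ with respect to Lebesgue measure. -/
open MeasureTheory

/-- Proposition 1 of the paper: for any measurable `f` with `f·q` integrable,
`∫ f(h ε) s(ε) q(h ε)/r(h ε) dε = ∫ f(z) q(z) dz`. -/
theorem stmt_0
    (s q r : ℝ → ℝ) (h : ℝ → ℝ)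
    (hs_meas : Measurable s) (hq_meas : Measurable q) (hr_meas : Measurable r)
    (hs_nonneg : ∀ x, 0 ≤ s x) (hq_nonneg : ∀ x, 0 ≤ q x) (hr_nonneg : ∀ x, 0 ≤ r x)
    (hs_prob : IsProbabilityMeasure (volume.withDensity fun x => ENNReal.ofReal (s x)))
    (hq_prob : IsProbabilityMeasure (volume.withDensity fun x => ENNReal.ofReal (q x)))
    (hr_prob : IsProbabilityMeasure (volume.withDensity fun x => ENNReal.ofReal (r x)))
    (hh_meas : Measurable h)
    (h_push : Measure.map h (volume.withDensity fun x => ENNReal.ofReal (s x))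
      = volume.withDensity fun x => ENNReal.ofReal (r x))
    (hr_pos : ∀ z, 0 < q z → 0 < r z)
    (f : ℝ → ℝ) (hf_meas : Measurable f)
    (hfq_int : Integrable (fun z => f z * q z)) :
    ∫ ε, f (h ε) * s ε * q (h ε) / r (h ε) = ∫ z, f z * q z := by
  set g : ℝ → ℝ := fun z => f z * q z / r z with hg_def
  have hg_meas : Measurable g := ((hf_meas.mul hq_meas).div hr_meas)
  have key : ∀ z, g z * r z = f z * q z := by
    intro z
    by_cases hz : r z = 0
    · have hq0 : q z = 0 := by
        by_contra hq0
        have : 0 < q z := lt_of_le_of_ne (hq_nonneg z) (Ne.symm hq0)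
        exact absurd (hr_pos z this) (by simp [hz])
      simp [hg_def, hz, hq0]
    · simp only [hg_def]; field_simp
  have step1 : ∀ ε, f (h ε) * s ε * q (h ε) / r (h ε) = s ε * g (h ε) := by
    intro ε; simp only [hg_def]; ring
  have hofReal : ∀ t : ℝ → ℝ,
      (fun x => ENNReal.ofReal (t x)) = fun x => ((t x).toNNReal : ENNReal) := by
    intro t; rfl
  calc ∫ ε, f (h ε) * s ε * q (h ε) / r (h ε)
      = ∫ ε, (s ε).toNNReal • g (h ε) := by
        refine integral_congr_ae (Filter.Eventually.of_forall fun ε => ?_)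
        dsimp only; rw [step1 ε]
        simp [NNReal.smul_def, Real.coe_toNNReal _ (hs_nonneg ε)]
    _ = ∫ ε, g (h ε) ∂(volume.withDensity fun x => ENNReal.ofReal (s x)) := by
        rw [hofReal s, integral_withDensity_eq_integral_smul
          (hs_meas.real_toNNReal) (fun ε => g (h ε))]
    _ = ∫ z, g z ∂(Measure.map h (volume.withDensity fun x => ENNReal.ofReal (s x))) := by
        rw [integral_map hh_meas.aemeasurable hg_meas.aestronglyMeasurable]
    _ = ∫ z, g z ∂(volume.withDensity fun x => ENNReal.ofReal (r x)) := by rw [h_push]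
    _ = ∫ z, (r z).toNNReal • g z := by
        rw [hofReal r, integral_withDensity_eq_integral_smul (hr_meas.real_toNNReal) g]
    _ = ∫ z, f z * q z := by
        refine integral_congr_ae (Filter.Eventually.of_forall fun z => ?_)
        dsimp only; rw [← key z]
        simp [NNReal.smul_def, Real.coe_toNNReal _ (hr_nonneg z), mul_comm]
end

section
/- Let M be a real constant with M ≥ 1 and q(z) ≤ M·r(z) for all z ∈ ℝ. Then ∫ s(ε)·q(h(ε))/(M·r(h(ε))) dε = 1/M; that is, the per-trial acceptance probability of the reparameterized rejection sampler equals 1/M. -/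
open MeasureTheory

/-- The per-trial acceptance probability of the reparameterized rejection sampler
equals `1/M`: `∫ s(ε) q(h ε)/(M r(h ε)) dε = 1/M`. -/
theorem stmt_1
    (s q r : ℝ → ℝ) (h : ℝ → ℝ)
    (hs_meas : Measurable s) (hq_meas : Measurable q) (hr_meas : Measurable r)
    (hs_nonneg : ∀ x, 0 ≤ s x) (hq_nonneg : ∀ x, 0 ≤ q x) (hr_nonneg : ∀ x, 0 ≤ r x)
    (hs_prob : IsProbabilityMeasure (volume.withDensity fun x => ENNReal.ofReal (s x)))
    (hq_prob : IsProbabilityMeasure (volume.withDensity fun x => ENNReal.ofReal (q x)))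
    (hr_prob : IsProbabilityMeasure (volume.withDensity fun x => ENNReal.ofReal (r x)))
    (hh_meas : Measurable h)
    (h_push : Measure.map h (volume.withDensity fun x => ENNReal.ofReal (s x))
      = volume.withDensity fun x => ENNReal.ofReal (r x))
    (hr_pos : ∀ z, 0 < q z → 0 < r z)
    (M : ℝ) (hM : 1 ≤ M) (hMqr : ∀ z, q z ≤ M * r z) :
    ∫ ε, s ε * q (h ε) / (M * r (h ε)) = 1 / M := by
  have hM0 : (0:ℝ) < M := lt_of_lt_of_le one_pos hM
  set g : ℝ → ℝ := fun z => q z / (M * r z) with hg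
  have hg_meas : Measurable g := hq_meas.div (measurable_const.mul hr_meas)
  have hdens : ∀ (f : ℝ → ℝ), (fun x => ENNReal.ofReal (f x))
      = fun x => ((f x).toNNReal : ENNReal) := fun f => rfl
  -- lintegral of q is 1
  have hq1 : ∫⁻ x, ENNReal.ofReal (q x) = 1 := by
    have := hq_prob.measure_univ
    rwa [withDensity_apply _ MeasurableSet.univ, setLIntegral_univ] at this
  have hqint : ∫ x, q x = 1 := by
    rw [integral_eq_lintegral_of_nonneg_ae (Filter.Eventually.of_forall hq_nonneg)
      hq_meas.aestronglyMeasurable, hq1, ENNReal.toReal_one]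
  have h1 : ∫ ε, s ε * q (h ε) / (M * r (h ε)) = ∫ ε, (s ε).toNNReal • g (h ε) := by
    apply integral_congr_ae
    filter_upwards with ε
    simp only [g, NNReal.smul_def, Real.coe_toNNReal _ (hs_nonneg ε), smul_eq_mul,
      mul_div_assoc]
  have h2 : ∫ ε, (s ε).toNNReal • g (h ε)
      = ∫ ε, g (h ε) ∂(volume.withDensity fun x => ENNReal.ofReal (s x)) := by
    rw [hdens s, integral_withDensity_eq_integral_smul hs_meas.real_toNNReal]
  have h3 : ∫ ε, g (h ε) ∂(volume.withDensity fun x => ENNReal.ofReal (s x))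
      = ∫ z, g z ∂(volume.withDensity fun x => ENNReal.ofReal (r x)) := by
    rw [← h_push, integral_map hh_meas.aemeasurable hg_meas.aestronglyMeasurable]
  have h4 : ∫ z, g z ∂(volume.withDensity fun x => ENNReal.ofReal (r x))
      = ∫ z, (r z).toNNReal • g z := by
    rw [hdens r, integral_withDensity_eq_integral_smul hr_meas.real_toNNReal]
  have h5 : ∫ z, (r z).toNNReal • g z = ∫ z, q z / M := by
    apply integral_congr_ae
    filter_upwards with z
    simp only [g, NNReal.smul_def, Real.coe_toNNReal _ (hr_nonneg z), smul_eq_mul]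
    rcases eq_or_lt_of_le (hr_nonneg z) with hz | hz
    · have hq0 : q z = 0 := by
        by_contra hq0
        have := hr_pos z (lt_of_le_of_ne (hq_nonneg z) (Ne.symm hq0))
        exact absurd this (by rw [← hz]; exact lt_irrefl 0)
      simp [hq0]
    · field_simp
  have h6 : ∫ z, q z / M = 1 / M := by
    rw [integral_div, hqint]
  rw [h1, h2, h3, h4, h5, h6]
end

section
/- Let α > 0 and let B be a natural number. On a probability space, let Z be distributed as Gamma(α + B, 1) and let U_1, …, U_B be each distributed as Uniform(0,1), with Z, U_1, …, U_B mutually independent. Then the random variable Z · ∏_{i=1}^{B} U_i^{1/(α + i − 1)} is distributed as Gamma(α, 1) (the shape-augmentation identity). -/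
open MeasureTheory ProbabilityTheory

section AuxiliaryLemmas

open Real Set Filter
open scoped ENNReal

lemma ftc_key {a t : ℝ} (ha : 0 < a) (ht : 0 ≤ t) :
    ∫ z in (0:ℝ)..t, (a * z ^ (a-1) * exp (-z) - z ^ a * exp (-z)) = t ^ a * exp (-t) := by
  have hcont : ContinuousOn (fun z : ℝ => z ^ a * exp (-z)) (Icc 0 t) :=
    (continuousOn_id.rpow_const fun z _ => Or.inr ha.le).mul
      (Continuous.continuousOn (by continuity))
  have hderiv : ∀ z ∈ Ioo (0:ℝ) t, HasDerivWithinAt (fun z : ℝ => z ^ a * exp (-z))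
      (a * z ^ (a-1) * exp (-z) - z ^ a * exp (-z)) (Ioi z) z := by
    intro z hz
    have h1 : HasDerivAt (fun z : ℝ => z ^ a) (a * z ^ (a-1)) z :=
      Real.hasDerivAt_rpow_const (Or.inl hz.1.ne')
    have h2 : HasDerivAt (fun z : ℝ => exp (-z)) (-exp (-z)) z := by
      simpa [Function.comp_def] using (Real.hasDerivAt_exp (-z)).comp z (hasDerivAt_neg z)
    have := h1.mul h2
    refine (HasDerivAt.hasDerivWithinAt ?_)
    convert this using 1
    · rfl
    · rfl
    · ring
  have hint : IntervalIntegrable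
      (fun z : ℝ => a * z ^ (a-1) * exp (-z) - z ^ a * exp (-z)) volume 0 t := by
    apply IntervalIntegrable.sub
    · have : IntervalIntegrable (fun z : ℝ => z ^ (a-1)) volume 0 t :=
        intervalIntegral.intervalIntegrable_rpow' (by linarith)
      have := (this.const_mul a).mul_continuousOn (g := fun z => exp (-z))
        (Continuous.continuousOn (by continuity))
      simpa [mul_assoc] using this
    · apply ContinuousOn.intervalIntegrable
      apply ContinuousOn.mul
      · exact (continuousOn_id.rpow_const fun z _ => Or.inr ha.le)
      · exact Continuous.continuousOn (by continuity)
  have := intervalIntegral.integral_eq_sub_of_hasDeriv_right_of_le ht hcont hderiv hint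
  rw [this]
  rw [Real.zero_rpow ha.ne']
  ring

lemma int1 {a t : ℝ} (ha : 0 < a) (ht : 0 ≤ t) :
    IntervalIntegrable (fun z : ℝ => z ^ (a-1) * exp (-z)) volume 0 t :=
  (intervalIntegral.intervalIntegrable_rpow' (by linarith)).mul_continuousOn
    (Continuous.continuousOn (by continuity))

lemma int2 {a t : ℝ} (ha : 0 < a) (ht : 0 ≤ t) :
    IntervalIntegrable (fun z : ℝ => z ^ a * exp (-z)) volume 0 t :=
  ContinuousOn.intervalIntegrable ((continuousOn_id.rpow_const fun z _ => Or.inr ha.le).mul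
    (Continuous.continuousOn (by continuity)))

lemma real_id {a t : ℝ} (ha : 0 < a) (ht : 0 ≤ t) :
    (∫ z in Ioc (0:ℝ) t, z ^ a * exp (-z) / Gamma (a+1)) + t ^ a * exp (-t) / Gamma (a+1)
      = ∫ z in Ioc (0:ℝ) t, z ^ (a-1) * exp (-z) / Gamma a := by
  have hG : Gamma (a+1) = a * Gamma a := Real.Gamma_add_one ha.ne'
  have hGa : 0 < Gamma a := Real.Gamma_pos_of_pos ha
  have key : (∫ z in (0:ℝ)..t, z ^ a * exp (-z)) + t ^ a * exp (-t)
      = a * ∫ z in (0:ℝ)..t, z ^ (a-1) * exp (-z) := by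
    have h := ftc_key ha ht
    have hsub := intervalIntegral.integral_sub ((int1 ha ht).const_mul a) (int2 ha ht)
    rw [intervalIntegral.integral_const_mul] at hsub
    have : a * (∫ z in (0:ℝ)..t, z ^ (a-1) * exp (-z)) - (∫ z in (0:ℝ)..t, z ^ a * exp (-z))
        = t ^ a * exp (-t) := by
      rw [← h, ← hsub]
      apply intervalIntegral.integral_congr
      intro z _
      ring
    linarith
  rw [← intervalIntegral.integral_of_le ht, ← intervalIntegral.integral_of_le ht]
  simp only [div_eq_mul_inv]
  rw [intervalIntegral.integral_mul_const, intervalIntegral.integral_mul_const]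
  rw [hG]
  field_simp
  rw [key]

lemma gamma_Iic_zero {a : ℝ} : gammaMeasure a 1 (Iic 0) = 0 := by
  rw [gammaMeasure, withDensity_apply _ measurableSet_Iic,
    lintegral_Iic_eq_lintegral_Iio_add_Icc _ le_rfl, lintegral_gammaPDF_of_nonpos le_rfl]
  rw [Icc_self]
  rw [show (volume.restrict ({0} : Set ℝ)) = 0 by simp [Measure.restrict_eq_zero]]
  simp

lemma gamma_Ioi_zero {a : ℝ} (ha : 0 < a) : gammaMeasure a 1 (Ioi 0) = 1 := by
  have : IsProbabilityMeasure (gammaMeasure a 1) := isProbabilityMeasure_gammaMeasure ha one_pos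
  have h0 : gammaMeasure a 1 (Iic 0) = 0 := gamma_Iic_zero
  have hc := measure_compl (μ := gammaMeasure a 1) measurableSet_Iic
    (by simp [h0] : gammaMeasure a 1 (Iic 0) ≠ ⊤)
  rw [compl_Iic] at hc
  rw [hc, h0]
  simp

lemma core_map {a : ℝ} (ha : 0 < a) :
    ((gammaMeasure (a+1) 1).prod (volume.restrict (Ioo (0:ℝ) 1))).map
      (fun p : ℝ × ℝ => p.1 * p.2 ^ (1/a)) = gammaMeasure a 1 := by
  have ha1 : (0:ℝ) < a + 1 := by linarith
  have hprob1 : IsProbabilityMeasure (gammaMeasure (a+1) 1) := isProbabilityMeasure_gammaMeasure ha1 one_pos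
  have hprob2 : IsProbabilityMeasure (volume.restrict (Ioo (0:ℝ) 1)) := ⟨by simp⟩
  have hprobG : IsProbabilityMeasure (gammaMeasure a 1) := isProbabilityMeasure_gammaMeasure ha one_pos
  have hf : Measurable fun p : ℝ × ℝ => p.1 * p.2 ^ (1/a) := by fun_prop
  refine Measure.ext_of_Iic _ _ fun t => ?_
  rw [Measure.map_apply hf measurableSet_Iic]
  have hS : MeasurableSet ((fun p : ℝ × ℝ => p.1 * p.2 ^ (1/a)) ⁻¹' Iic t) :=
    hf measurableSet_Iic
  rcases le_or_gt t 0 with hle | hpos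
  · have hRHS : gammaMeasure a 1 (Iic t) = 0 :=
      measure_mono_null (Iic_subset_Iic.mpr hle) gamma_Iic_zero
    rw [hRHS]
    refine measure_mono_null (t := (Ioi 0 ×ˢ Ioo 0 1 : Set (ℝ × ℝ))ᶜ) ?_ ?_
    · intro p hp
      simp only [mem_compl_iff, mem_prod, mem_Ioi, mem_Ioo, not_and, not_lt] at *
      intro h1
      by_contra h
      push_neg at h
      have hpos' : 0 < p.1 * p.2 ^ (1/a) := mul_pos h1 (rpow_pos_of_pos h.1 _)
      have hle' : p.1 * p.2 ^ (1/a) ≤ t := hp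
      linarith
    · have h1 : ((gammaMeasure (a+1) 1).prod (volume.restrict (Ioo (0:ℝ) 1)))
          (Ioi 0 ×ˢ Ioo 0 1) = 1 := by
        rw [Measure.prod_prod, gamma_Ioi_zero ha1]
        simp [Measure.restrict_apply' measurableSet_Ioo]
      rw [measure_compl (measurableSet_Ioi.prod measurableSet_Ioo) (by simp [h1]), h1]
      simp
  ·
    have ha1 : (0:ℝ) < a + 1 := by linarith
    have hGpos : 0 < Gamma a := Real.Gamma_pos_of_pos ha
    have hG1pos : 0 < Gamma (a+1) := Real.Gamma_pos_of_pos ha1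
    rw [Measure.prod_apply hS]
    set k : ℝ → ℝ≥0∞ :=
      fun z => volume.restrict (Ioo (0:ℝ) 1)
        (Prod.mk z ⁻¹' ((fun p : ℝ × ℝ => p.1 * p.2 ^ (1/a)) ⁻¹' Iic t)) with hkdef
    have hkm : Measurable k := measurable_measure_prodMk_left hS
    have hpdfm : Measurable (gammaPDF (a+1) 1) :=
      (measurable_gammaPDFReal (a+1) 1).ennreal_ofReal
    rw [gammaMeasure, lintegral_withDensity_eq_lintegral_mul _ hpdfm hkm]
    -- split domain
    rw [← lintegral_add_compl (gammaPDF (a+1) 1 * k) (measurableSet_Iic (a := (0:ℝ))),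
      compl_Iic, ← Ioc_union_Ioi_eq_Ioi hpos.le,
      lintegral_union measurableSet_Ioi (Set.Ioc_disjoint_Ioi le_rfl)]
    have piece0 : ∫⁻ z in Iic (0:ℝ), (gammaPDF (a+1) 1 * k) z = 0 := by
      rw [setLIntegral_congr_fun (g := fun _ => 0) measurableSet_Iic]
      · simp
      · refine fun z (hz : z ≤ 0) => ?_
        have hpdf0 : gammaPDF (a+1) 1 z = 0 := by
          rcases lt_or_eq_of_le hz with h | h
          · exact gammaPDF_of_neg h
          · subst h
            rw [gammaPDF_of_nonneg le_rfl,
              show (0:ℝ) ^ (a+1-1) = 0 from Real.zero_rpow (by linarith)]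
            simp
        simp [hpdf0]
    have piece1 : ∫⁻ z in Ioc (0:ℝ) t, (gammaPDF (a+1) 1 * k) z
        = ∫⁻ z in Ioc (0:ℝ) t, ENNReal.ofReal (z ^ a * exp (-z) / Gamma (a+1)) := by
      refine setLIntegral_congr_fun measurableSet_Ioc (fun z hz => ?_)
      have hk1 : k z = 1 := by
        have hkz : k z = volume.restrict (Ioo (0:ℝ) 1)
            (Prod.mk z ⁻¹' ((fun p : ℝ × ℝ => p.1 * p.2 ^ (1/a)) ⁻¹' Iic t)) := rfl
        rw [hkz]
        have hsub : Ioo (0:ℝ) 1 ⊆ Prod.mk z ⁻¹' ((fun p : ℝ × ℝ => p.1 * p.2 ^ (1/a)) ⁻¹' Iic t) := by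
          intro u hu
          simp only [mem_preimage, mem_Iic]
          have h1 : u ^ (1/a) ≤ 1 := rpow_le_one hu.1.le hu.2.le (by positivity)
          calc z * u ^ (1/a) ≤ z * 1 := by
                apply mul_le_mul_of_nonneg_left h1 hz.1.le
            _ = z := mul_one z
            _ ≤ t := hz.2
        rw [Measure.restrict_apply' measurableSet_Ioo, inter_eq_self_of_subset_right hsub]
        simp
      rw [Pi.mul_apply, hk1, mul_one, gammaPDF_of_nonneg hz.1.le]
      congr 1
      rw [Real.one_rpow, add_sub_cancel_right]
      ring
    have piece2 : ∫⁻ z in Ioi t, (gammaPDF (a+1) 1 * k) z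
        = ENNReal.ofReal (t ^ a / Gamma (a+1)) * ENNReal.ofReal (exp (-t)) := by
      have step : ∫⁻ z in Ioi t, (gammaPDF (a+1) 1 * k) z
          = ∫⁻ z in Ioi t, ENNReal.ofReal (t ^ a / Gamma (a+1)) * ENNReal.ofReal (exp (-z)) := by
        refine setLIntegral_congr_fun measurableSet_Ioi (fun z hz => ?_)
        have hzt : t < z := hz
        have hz0 : (0:ℝ) < z := lt_trans hpos hzt
        set c : ℝ := (t/z) ^ a with hc
        have hc0 : 0 < c := rpow_pos_of_pos (div_pos hpos hz0) a
        have hc1 : c < 1 := rpow_lt_one (le_of_lt (div_pos hpos hz0))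
          ((div_lt_one hz0).mpr hzt) ha
        have hkc : k z = ENNReal.ofReal c := by
          have hkz : k z = volume.restrict (Ioo (0:ℝ) 1)
              (Prod.mk z ⁻¹' ((fun p : ℝ × ℝ => p.1 * p.2 ^ (1/a)) ⁻¹' Iic t)) := rfl
          rw [hkz]
          have hset : (Prod.mk z ⁻¹' ((fun p : ℝ × ℝ => p.1 * p.2 ^ (1/a)) ⁻¹' Iic t)) ∩ Ioo 0 1
              = Ioc 0 c := by
            ext u
            simp only [mem_inter_iff, mem_preimage, mem_Iic, mem_Ioo, mem_Ioc]
            constructor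
            · rintro ⟨hle, hu0, _⟩
              refine ⟨hu0, ?_⟩
              have h1 : u ^ (1/a) ≤ t / z := by
                rw [le_div_iff₀ hz0]
                linarith [mul_comm z (u ^ (1/a))]
              rw [one_div] at h1
              exact (rpow_inv_le_iff_of_pos hu0.le (by positivity) ha).mp h1
            · rintro ⟨hu0, huc⟩
              refine ⟨?_, hu0, lt_of_le_of_lt huc hc1⟩
              have h1 : u ^ (1/a) ≤ t / z := by
                rw [one_div]
                exact (rpow_inv_le_iff_of_pos hu0.le (by positivity) ha).mpr huc
              calc z * u ^ (1/a) ≤ z * (t/z) := by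
                    apply mul_le_mul_of_nonneg_left h1 hz0.le
                _ = t := by field_simp
          rw [Measure.restrict_apply' measurableSet_Ioo, hset, Real.volume_Ioc]
          simp
        rw [Pi.mul_apply, hkc, gammaPDF_of_nonneg hz0.le, ← ENNReal.ofReal_mul (by positivity),
          ← ENNReal.ofReal_mul (by positivity)]
        congr 1
        rw [Real.one_rpow, add_sub_cancel_right, hc, div_rpow hpos.le hz0.le]
        have hza : (0:ℝ) < z ^ a := rpow_pos_of_pos hz0 a
        field_simp
      rw [step, lintegral_const_mul _ (by fun_prop)]
      congr 1
      rw [← ofReal_integral_eq_lintegral_ofReal]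
      · rw [integral_exp_neg_Ioi]
      · have := exp_neg_integrableOn_Ioi t (one_pos)
        simpa [IntegrableOn] using this
      · exact ae_of_all _ fun z => (exp_pos _).le
    rw [piece0, piece1, piece2, zero_add]
    -- RHS
    rw [gammaMeasure, withDensity_apply _ measurableSet_Iic,
      lintegral_Iic_eq_lintegral_Iio_add_Icc _ hpos.le, lintegral_gammaPDF_of_nonpos le_rfl,
      zero_add, Measure.restrict_congr_set Ioc_ae_eq_Icc.symm]
    have rhs1 : ∫⁻ z in Ioc (0:ℝ) t, gammaPDF a 1 z
        = ∫⁻ z in Ioc (0:ℝ) t, ENNReal.ofReal (z ^ (a-1) * exp (-z) / Gamma a) := by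
      refine setLIntegral_congr_fun measurableSet_Ioc (fun z hz => ?_)
      rw [gammaPDF_of_nonneg hz.1.le]
      congr 1
      rw [Real.one_rpow]
      ring
    rw [rhs1]
    -- convert to real integrals
    have i2 : IntegrableOn (fun z : ℝ => z ^ a * exp (-z) / Gamma (a+1)) (Ioc 0 t) volume := by
      have := (int2 ha hpos.le (t := t)).div_const (Gamma (a+1))
      rwa [intervalIntegrable_iff_integrableOn_Ioc_of_le hpos.le] at this
    have i1 : IntegrableOn (fun z : ℝ => z ^ (a-1) * exp (-z) / Gamma a) (Ioc 0 t) volume := by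
      have := (int1 ha hpos.le (t := t)).div_const (Gamma a)
      rwa [intervalIntegrable_iff_integrableOn_Ioc_of_le hpos.le] at this
    have nn2 : 0 ≤ᵐ[volume.restrict (Ioc (0:ℝ) t)] fun z : ℝ => z ^ a * exp (-z) / Gamma (a+1) :=
      (ae_restrict_iff' measurableSet_Ioc).mpr (ae_of_all _ fun z hz => by have := hz.1; positivity)
    have nn1 : 0 ≤ᵐ[volume.restrict (Ioc (0:ℝ) t)] fun z : ℝ => z ^ (a-1) * exp (-z) / Gamma a :=
      (ae_restrict_iff' measurableSet_Ioc).mpr (ae_of_all _ fun z hz => by have := hz.1; positivity)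
    rw [← ofReal_integral_eq_lintegral_ofReal i2 nn2, ← ofReal_integral_eq_lintegral_ofReal i1 nn1,
      ← ENNReal.ofReal_mul (by positivity), ← ENNReal.ofReal_add
        (setIntegral_nonneg measurableSet_Ioc fun z hz => by have := hz.1; positivity) (by positivity)]
    congr 1
    have := real_id ha hpos.le
    rw [← this]
    ring


lemma iIndepFun_precomp {ι ι' Ω : Type*} [MeasurableSpace Ω] {P : Measure Ω}
    {f : ι → Ω → ℝ} {g : ι' → ι} (hg : Function.Injective g)
    (h : iIndepFun f P) :
    iIndepFun (fun i => f (g i)) P := by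
  classical
  rw [iIndepFun_iff_measure_inter_preimage_eq_mul] at h ⊢
  intro S sets hsets
  set sets' : ι → Set ℝ := fun j =>
    if hj : ∃ i ∈ S, g i = j then sets hj.choose else Set.univ with hsets'def
  have hkey : ∀ i ∈ S, sets' (g i) = sets i := by
    intro i hi
    have hj : ∃ i' ∈ S, g i' = g i := ⟨i, hi, rfl⟩
    simp only [hsets'def, dif_pos hj]
    exact congrArg sets (hg hj.choose_spec.2)
  have happ := h (S.image g) (sets := sets') (fun j hj => by
    simp only [hsets'def]
    split_ifs with hex
    · exact hsets _ hex.choose_spec.1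
    · exact MeasurableSet.univ)
  rw [Finset.set_biInter_finset_image, Finset.prod_image
    (fun a _ b _ hab => hg hab)] at happ
  have e1 : (⋂ i ∈ S, f (g i) ⁻¹' sets' (g i)) = ⋂ i ∈ S, (fun i => f (g i)) i ⁻¹' sets i := by
    apply Set.iInter₂_congr
    intro i hi
    rw [hkey i hi]
  have e2 : ∀ i ∈ S, P (f (g i) ⁻¹' sets' (g i)) = P ((fun i => f (g i)) i ⁻¹' sets i) := by
    intro i hi
    rw [hkey i hi]
  rw [e1, Finset.prod_congr rfl e2] at happ
  exact happ

lemma iIndepFun_congr_ae {ι Ω : Type*} [MeasurableSpace Ω] {P : Measure Ω} {f g : ι → Ω → ℝ}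
    (h : iIndepFun f P)
    (hfg : ∀ i, f i =ᵐ[P] g i) :
    iIndepFun g P := by
  rw [iIndepFun_iff_measure_inter_preimage_eq_mul] at h ⊢
  intro S sets hsets
  have h1 : ∀ i, P (g i ⁻¹' sets i) = P (f i ⁻¹' sets i) := by
    intro i
    refine measure_congr (Filter.eventuallyEq_set.mpr ?_)
    filter_upwards [hfg i] with ω hω
    simp [Set.mem_preimage, hω]
  have h2 : P (⋂ i ∈ S, g i ⁻¹' sets i) = P (⋂ i ∈ S, f i ⁻¹' sets i) := by
    refine measure_congr (Filter.eventuallyEq_set.mpr ?_)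
    filter_upwards [(Filter.eventually_all_finset S).mpr (fun i _ => hfg i)] with ω hω
    simp only [Set.mem_iInter, Set.mem_preimage]
    constructor
    · intro hh i hi; rw [hω i hi]; exact hh i hi
    · intro hh i hi; rw [← hω i hi]; exact hh i hi
  rw [h2, h S hsets, Finset.prod_congr rfl (fun i _ => h1 i)]

lemma step_map {a : ℝ} (ha : 0 < a) {Ω : Type*} [MeasurableSpace Ω] {P : Measure Ω}
    [IsProbabilityMeasure P] {V W : Ω → ℝ} (hV : Measurable V) (hW : Measurable W)
    (hind : IndepFun V W P) (hVm : Measure.map V P = gammaMeasure (a+1) 1)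
    (hWm : Measure.map W P = volume.restrict (Ioo (0:ℝ) 1)) :
    Measure.map (fun ω => V ω * W ω ^ (1/a)) P = gammaMeasure a 1 := by
  have hpair : Measure.map (fun ω => (V ω, W ω)) P = (Measure.map V P).prod (Measure.map W P) :=
    (indepFun_iff_map_prod_eq_prod_map_map hV.aemeasurable hW.aemeasurable).mp hind
  have hf : Measurable fun p : ℝ × ℝ => p.1 * p.2 ^ (1/a) := by fun_prop
  have hcomp : (fun ω => V ω * W ω ^ (1/a))
      = (fun p : ℝ × ℝ => p.1 * p.2 ^ (1/a)) ∘ (fun ω => (V ω, W ω)) := rfl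
  rw [hcomp, ← Measure.map_map hf (hV.prodMk hW), hpair, hVm, hWm, core_map ha]

theorem aux (B : ℕ) : ∀ (α : ℝ), 0 < α → ∀ {Ω : Type*} [MeasurableSpace Ω] (P : Measure Ω)
    [IsProbabilityMeasure P] (Z : Ω → ℝ) (U : Fin B → Ω → ℝ), Measurable Z →
    (∀ i, Measurable (U i)) →
    iIndepFun
      (fun i => Option.elim i Z U) P →
    Measure.map Z P = gammaMeasure (α + B) 1 →
    (∀ i, Measure.map (U i) P = volume.restrict (Set.Ioo (0 : ℝ) 1)) →
    Measure.map (fun ω => Z ω * ∏ i : Fin B, U i ω ^ (1 / (α + i))) P = gammaMeasure α 1 := by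
  induction B with
  | zero =>
    intro α hα Ω _ P _ Z U hZm hUm hind hZ hU
    have he : (fun ω => Z ω * ∏ i : Fin 0, U i ω ^ (1 / (α + i))) = Z := by
      funext ω; simp
    rw [he, hZ]
    norm_num
  | succ B ih =>
    intro α hα Ω _ P _ Z U hZm hUm hind hZ hU
    set V := fun ω => Z ω * ∏ i : Fin B, U i.succ ω ^ (1 / ((α+1) + i)) with hVdef
    have hUS : ∀ i : Fin B, Measurable (U i.succ) := fun i => hUm _
    have hind' : iIndepFun
        (fun i => Option.elim i Z (fun j : Fin B => U j.succ)) P := by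
      have h := iIndepFun_precomp (g := Option.map (Fin.succ : Fin B → Fin (B+1)))
        (Option.map_injective (Fin.succ_injective B)) hind
      convert h using 1
      funext o
      cases o <;> rfl
    have hZ' : Measure.map Z P = gammaMeasure ((α+1) + B) 1 := by
      rw [hZ]
      congr 1
      push_cast
      ring
    have hV : Measure.map V P = gammaMeasure (α+1) 1 :=
      ih (α+1) (by linarith) P Z (fun j : Fin B => U j.succ) hZm hUS hind' hZ' (fun i => hU _)
    have hVm : Measurable V := by
      apply hZm.mul
      exact Finset.measurable_prod _ fun i _ => by fun_prop
    have hindV : IndepFun V (U 0) P := by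
      classical
      set S : Finset (Option (Fin (B+1))) :=
        insert none (Finset.univ.image (fun j : Fin B => (some j.succ : Option (Fin (B+1)))))
        with hSdef
      set T : Finset (Option (Fin (B+1))) := {some 0} with hTdef
      have hST : Disjoint S T := by
        rw [Finset.disjoint_right]
        intro x hx
        rw [hTdef, Finset.mem_singleton] at hx
        subst hx
        rw [hSdef]
        simp only [Finset.mem_insert, Finset.mem_image, Finset.mem_univ, true_and]
        push_neg
        refine ⟨Option.some_ne_none _, fun j => fun hc => ?_⟩
        exact Fin.succ_ne_zero j (Option.some_injective _ hc)
      have hmeas : ∀ i : Option (Fin (B+1)), Measurable ((fun i => Option.elim i Z U) i) := by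
        rintro (_ | i)
        · exact hZm
        · exact hUm i
      have h2 := hind.indepFun_finset S T hST hmeas
      have hnone : (none : Option (Fin (B+1))) ∈ S := by simp [hSdef]
      have hsome : ∀ j : Fin B, (some j.succ : Option (Fin (B+1))) ∈ S := by
        intro j; rw [hSdef]; simp
      have h0T : (some (0 : Fin (B+1)) : Option (Fin (B+1))) ∈ T := by simp [hTdef]
      let φ : ((i : S) → ℝ) → ℝ := fun v =>
        v ⟨none, hnone⟩ * ∏ j : Fin B, v ⟨some j.succ, hsome j⟩ ^ (1 / ((α+1) + j))
      let ψ : ((i : T) → ℝ) → ℝ := fun v => v ⟨some 0, h0T⟩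
      have hφ : Measurable φ := by
        apply (measurable_pi_apply _).mul
        exact Finset.measurable_prod _ fun j _ => by fun_prop
      have hψ : Measurable ψ := measurable_pi_apply _
      have h3 := h2.comp hφ hψ
      exact h3
    have hstep := step_map hα hVm (hUm 0) hindV hV (hU 0)
    have hfun : (fun ω => Z ω * ∏ i : Fin (B+1), U i ω ^ (1 / (α + i)))
        = fun ω => V ω * U 0 ω ^ (1/α) := by
      funext ω
      rw [Fin.prod_univ_succ]
      have hprod : ∀ j : Fin B, U j.succ ω ^ (1 / (α + ((j.succ : Fin (B+1)) : ℕ) : ℝ))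
          = U j.succ ω ^ (1 / ((α+1) + j)) := by
        intro j
        congr 1
        rw [Fin.val_succ]
        push_cast
        ring
      rw [Finset.prod_congr rfl (fun j _ => hprod j)]
      simp only [Fin.val_zero, Nat.cast_zero, add_zero, hVdef]
      ring
    rw [hfun]
    exact hstep

end AuxiliaryLemmas

section Main
open Set Real

/-- Shape augmentation identity: if `Z ~ Gamma(α + B, 1)` and `U_1, …, U_B ~ Uniform(0,1)`
are mutually independent, then `Z * ∏_{i=1}^B U_i^(1/(α+i-1)) ~ Gamma(α, 1)`.
(Here `i : Fin B` runs over `0, …, B-1`, so the exponent is `1/(α + i)`.) -/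
theorem stmt_6 (α : ℝ) (hα : 0 < α) (B : ℕ)
    {Ω : Type*} [MeasurableSpace Ω] (P : Measure Ω) [IsProbabilityMeasure P]
    (Z : Ω → ℝ) (U : Fin B → Ω → ℝ)
    (h_indep : iIndepFun
      (fun i => Option.elim i Z U) P)
    (hZ : Measure.map Z P = gammaMeasure (α + B) 1)
    (hU : ∀ i, Measure.map (U i) P = volume.restrict (Set.Ioo (0 : ℝ) 1)) :
    Measure.map (fun ω => Z ω * ∏ i : Fin B, U i ω ^ (1 / (α + i))) P
      = gammaMeasure α 1 := by
  have hαB : (0:ℝ) < α + B := by positivity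
  have hZae : AEMeasurable Z P := by
    by_contra h
    rw [Measure.map_of_not_aemeasurable h] at hZ
    have hprob : IsProbabilityMeasure (gammaMeasure (α + B) 1) :=
      isProbabilityMeasure_gammaMeasure hαB one_pos
    have := congrArg (fun μ : Measure ℝ => μ Set.univ) hZ
    simp [measure_univ] at this
  have hUae : ∀ i, AEMeasurable (U i) P := by
    intro i
    by_contra h
    have hU' := hU i
    rw [Measure.map_of_not_aemeasurable h] at hU'
    have hprob : IsProbabilityMeasure (volume.restrict (Set.Ioo (0:ℝ) 1)) := ⟨by simp⟩
    have := congrArg (fun μ : Measure ℝ => μ Set.univ) hU'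
    simp [measure_univ] at this
  set Z' := hZae.mk Z with hZ'def
  set U' := fun i => (hUae i).mk (U i) with hU'def
  have hZ'm : Measurable Z' := hZae.measurable_mk
  have hU'm : ∀ i, Measurable (U' i) := fun i => (hUae i).measurable_mk
  have hind' : iIndepFun
      (fun i => Option.elim i Z' U') P := by
    refine iIndepFun_congr_ae h_indep fun o => ?_
    cases o with
    | none => exact hZae.ae_eq_mk
    | some i => exact (hUae i).ae_eq_mk
  have hZmap : Measure.map Z' P = gammaMeasure (α + B) 1 := by
    rw [← Measure.map_congr hZae.ae_eq_mk, hZ]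
  have hUmap : ∀ i, Measure.map (U' i) P = volume.restrict (Set.Ioo (0:ℝ) 1) := fun i => by
    rw [← Measure.map_congr (hUae i).ae_eq_mk, hU i]
  have hmain := aux B α hα P Z' U' hZ'm hU'm hind' hZmap hUmap
  rw [← hmain]
  apply Measure.map_congr
  have hUall : ∀ᵐ ω ∂P, ∀ i, U i ω = U' i ω := ae_all_iff.mpr fun i => (hUae i).ae_eq_mk
  filter_upwards [hZae.ae_eq_mk, hUall] with ω h1 h2
  rw [show Z' ω = Z ω from h1.symm]
  congr 1
  exact Finset.prod_congr rfl fun i _ => by rw [h2 i]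

end Main
end

section
/- Let α > 0 and β > 0. If X is distributed as Gamma(α, 1) and Y is distributed as Gamma(β, 1), with X and Y independent, then X/(X+Y) has density x ↦ (Γ(α+β)/(Γ(α)·Γ(β)))·x^{α−1}·(1−x)^{β−1} for 0 < x < 1 and 0 otherwise, with respect to Lebesgue measure on ℝ; i.e., X/(X+Y) follows the Beta(α, β) distribution. -/
open MeasureTheory ProbabilityTheory Real Set
open scoped ENNReal

noncomputable def Tmap : ℝ × ℝ → ℝ × ℝ := fun q => (q.1 * q.2, q.2 - q.1 * q.2)

noncomputable def Bder (p : ℝ × ℝ) : ℝ × ℝ →L[ℝ] ℝ × ℝ :=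
  LinearMap.toContinuousLinearMap (Matrix.toLin (Module.Basis.finTwoProd ℝ) (Module.Basis.finTwoProd ℝ)
    !![p.2, p.1; -p.2, 1 - p.1])

lemma hasFDerivAt_Tmap (p : ℝ × ℝ) : HasFDerivAt Tmap (Bder p) p := by
  unfold Tmap Bder
  rw [Matrix.toLin_finTwoProd_toContinuousLinearMap]
  have h1 : HasFDerivAt (fun q : ℝ × ℝ => q.1 * q.2)
      (p.2 • ContinuousLinearMap.fst ℝ ℝ ℝ + p.1 • ContinuousLinearMap.snd ℝ ℝ ℝ) p := by
    have := (hasFDerivAt_fst (𝕜 := ℝ) (p := p) (E := ℝ) (F := ℝ)).mul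
      (hasFDerivAt_snd (𝕜 := ℝ) (p := p) (E := ℝ) (F := ℝ))
    refine this.congr_fderiv ?_
    ext q <;> simp [mul_comm]
  have h2 : HasFDerivAt (fun q : ℝ × ℝ => q.2 - q.1 * q.2)
      ((-p.2) • ContinuousLinearMap.fst ℝ ℝ ℝ + (1 - p.1) • ContinuousLinearMap.snd ℝ ℝ ℝ) p := by
    have := (hasFDerivAt_snd (𝕜 := ℝ) (p := p) (E := ℝ) (F := ℝ)).sub h1
    refine this.congr_fderiv ?_
    ext q <;> simp <;> ring
  exact h1.prodMk h2

lemma Bder_det (p : ℝ × ℝ) : (Bder p).det = p.2 := by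
  unfold Bder
  simp only [LinearMap.det_toContinuousLinearMap, LinearMap.det_toLin, Matrix.det_fin_two_of]
  ring

lemma Tmap_injOn : Set.InjOn Tmap (Set.Ioo (0:ℝ) 1 ×ˢ Set.Ioi (0:ℝ)) := by
  rintro ⟨t, u⟩ ⟨ht, hu⟩ ⟨t', u'⟩ ⟨ht', hu'⟩ h
  simp only [Tmap, Prod.mk.injEq] at h
  have hu2 : u = u' := by nlinarith [h.1, h.2]
  subst hu2
  have : t = t' := by
    have hu0 : u ≠ 0 := ne_of_gt hu
    field_simp at h
    exact h.1
  simp [this]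

lemma Tmap_image (s : Set ℝ) :
    Tmap '' ((Set.Ioo (0:ℝ) 1 ∩ s) ×ˢ Set.Ioi (0:ℝ))
      = ((fun z : ℝ × ℝ => z.1 / (z.1 + z.2)) ⁻¹' s) ∩ (Set.Ioi (0:ℝ) ×ˢ Set.Ioi (0:ℝ)) := by
  ext ⟨x, y⟩
  constructor
  · rintro ⟨⟨t, u⟩, ⟨⟨⟨ht0, ht1⟩, hts⟩, hu⟩, h⟩
    simp only [Tmap, Prod.mk.injEq] at h
    obtain ⟨hx, hy⟩ := h
    simp only [Set.mem_Ioi] at hu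
    dsimp only at ht0 ht1 hts hu
    have hu' : (0:ℝ) < u := hu
    constructor
    · have hxy : x + y = u := by rw [← hx, ← hy]; ring
      have : x / (x + y) = t := by
        rw [hxy, ← hx]; field_simp
      simpa [Set.mem_preimage, this]
    · constructor
      · rw [Set.mem_Ioi]; dsimp only; rw [← hx]; positivity
      · rw [Set.mem_Ioi]; dsimp only; rw [← hy]
        nlinarith [mul_pos hu' (sub_pos.mpr ht1)]
  · rintro ⟨hs, hx, hy⟩
    simp only [Set.mem_Ioi] at hx hy
    refine ⟨(x / (x + y), x + y), ⟨⟨⟨?_, ?_⟩, hs⟩, by simp [Set.mem_Ioi]; linarith⟩, ?_⟩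
    · positivity
    · rw [div_lt_one (by linarith)]; linarith
    · simp only [Tmap, Prod.mk.injEq]
      constructor
      · field_simp
      · field_simp; ring

lemma wd_prod (f g : ℝ → ℝ≥0∞) (hf : Measurable f) (hg : Measurable g)
    [SigmaFinite (volume.withDensity f)] [SigmaFinite (volume.withDensity g)] :
    (volume.withDensity f).prod (volume.withDensity g)
      = (volume : Measure (ℝ × ℝ)).withDensity (fun z => f z.1 * g z.2) := by
  refine Measure.prod_eq fun s t hs ht => ?_
  rw [withDensity_apply _ (hs.prod ht), withDensity_apply _ hs, withDensity_apply _ ht,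
    Measure.volume_eq_prod, ← Measure.prod_restrict,
    lintegral_prod_mul hf.aemeasurable hg.aemeasurable]

lemma gamma_prod (a b : ℝ) (ha : 0 < a) (hb : 0 < b) :
    (gammaMeasure a 1).prod (gammaMeasure b 1)
      = (volume : Measure (ℝ × ℝ)).withDensity
          (fun z => gammaPDF a 1 z.1 * gammaPDF b 1 z.2) := by
  haveI := isProbabilityMeasure_gammaMeasure ha one_pos
  haveI := isProbabilityMeasure_gammaMeasure hb one_pos
  haveI : SigmaFinite (volume.withDensity (gammaPDF a 1)) := by
    rw [← gammaMeasure]; infer_instance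
  haveI : SigmaFinite (volume.withDensity (gammaPDF b 1)) := by
    rw [← gammaMeasure]; infer_instance
  exact wd_prod _ _ (measurable_gammaPDFReal a 1).ennreal_ofReal
    (measurable_gammaPDFReal b 1).ennreal_ofReal

lemma gamma_lintegral (a : ℝ) (ha : 0 < a) :
    ∫⁻ x in Set.Ioi (0:ℝ), ENNReal.ofReal (x ^ (a - 1) * Real.exp (-x))
      = ENNReal.ofReal (Real.Gamma a) := by
  rw [Real.Gamma_eq_integral ha,
    MeasureTheory.ofReal_integral_eq_lintegral_ofReal (Real.GammaIntegral_convergent ha)]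
  · refine lintegral_congr_ae ?_
    filter_upwards with x
    rw [mul_comm]
  · filter_upwards [ae_restrict_mem measurableSet_Ioi] with x hx
    have : (0:ℝ) < x := hx
    positivity

/-- If `X ~ Gamma(α,1)` and `Y ~ Gamma(β,1)` are independent, then `X/(X+Y)` has the
`Beta(α,β)` density `x ↦ Γ(α+β)/(Γ(α)Γ(β)) x^(α-1) (1-x)^(β-1)` on `(0,1)`
(and `0` elsewhere) with respect to Lebesgue measure. -/
theorem stmt_7 (α β : ℝ) (hα : 0 < α) (hβ : 0 < β)
    {Ω : Type*} [MeasurableSpace Ω] (P : Measure Ω) [IsProbabilityMeasure P]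
    (X Y : Ω → ℝ)
    (h_indep : IndepFun X Y P)
    (hX : Measure.map X P = gammaMeasure α 1)
    (hY : Measure.map Y P = gammaMeasure β 1) :
    Measure.map (fun ω => X ω / (X ω + Y ω)) P
      = volume.withDensity (fun x => ENNReal.ofReal
          (if x ∈ Set.Ioo (0 : ℝ) 1 then
            Real.Gamma (α + β) / (Real.Gamma α * Real.Gamma β)
              * x ^ (α - 1) * (1 - x) ^ (β - 1)
          else 0)) := by
  haveI := isProbabilityMeasure_gammaMeasure hα (one_pos (α := ℝ))
  haveI := isProbabilityMeasure_gammaMeasure hβ (one_pos (α := ℝ))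
  set c : ℝ × ℝ → ℝ := fun z => z.1 / (z.1 + z.2) with hc_def
  have hcm : Measurable c := measurable_fst.div (measurable_fst.add measurable_snd)
  have hXm : AEMeasurable X P := by
    by_contra h
    have h0 := Measure.map_of_not_aemeasurable h
    rw [hX] at h0
    exact IsProbabilityMeasure.ne_zero (gammaMeasure α 1) h0
  have hYm : AEMeasurable Y P := by
    by_contra h
    have h0 := Measure.map_of_not_aemeasurable h
    rw [hY] at h0
    exact IsProbabilityMeasure.ne_zero (gammaMeasure β 1) h0
  have hpair : Measure.map (fun ω => (X ω, Y ω)) P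
      = (gammaMeasure α 1).prod (gammaMeasure β 1) := by
    rw [(indepFun_iff_map_prod_eq_prod_map_map hXm hYm).mp h_indep, hX, hY]
  have hstep : Measure.map (fun ω => X ω / (X ω + Y ω)) P
      = Measure.map c ((gammaMeasure α 1).prod (gammaMeasure β 1)) := by
    rw [← hpair, AEMeasurable.map_map_of_aemeasurable hcm.aemeasurable (hXm.prodMk hYm)]
    rfl
  rw [hstep, gamma_prod α β hα hβ]
  set ρ : ℝ × ℝ → ℝ≥0∞ := fun z => gammaPDF α 1 z.1 * gammaPDF β 1 z.2 with hρ_def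
  have hρm : Measurable ρ :=
    ((measurable_gammaPDFReal α 1).ennreal_ofReal.comp measurable_fst).mul
      ((measurable_gammaPDFReal β 1).ennreal_ofReal.comp measurable_snd)
  set D : Set (ℝ × ℝ) := Set.Ioi (0:ℝ) ×ˢ Set.Ioi (0:ℝ) with hD_def
  have hDm : MeasurableSet D := measurableSet_Ioi.prod measurableSet_Ioi
  -- the density vanishes a.e. outside D
  have hae : ρ =ᵐ[(volume : Measure (ℝ × ℝ))] D.indicator ρ := by
    have hN : (volume : Measure (ℝ × ℝ))
        ({z : ℝ × ℝ | z.1 = 0} ∪ {z : ℝ × ℝ | z.2 = 0}) = 0 := by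
      refine measure_union_null ?_ ?_
      · have : {z : ℝ × ℝ | z.1 = 0} = ({0} : Set ℝ) ×ˢ (Set.univ : Set ℝ) := by
          ext z; simp [Prod.ext_iff, eq_comm]
        rw [this, Measure.volume_eq_prod, Measure.prod_prod]
        simp
      · have : {z : ℝ × ℝ | z.2 = 0} = (Set.univ : Set ℝ) ×ˢ ({0} : Set ℝ) := by
          ext z; simp [Prod.ext_iff, eq_comm]
        rw [this, Measure.volume_eq_prod, Measure.prod_prod]
        simp
    rw [Filter.eventuallyEq_iff_exists_mem]
    refine ⟨({z : ℝ × ℝ | z.1 = 0} ∪ {z : ℝ × ℝ | z.2 = 0})ᶜ,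
      (compl_mem_ae_iff).mpr hN, ?_⟩
    rintro ⟨x, y⟩ hz
    simp only [Set.mem_compl_iff, Set.mem_union, Set.mem_setOf_eq, not_or] at hz
    by_cases hD : (x, y) ∈ D
    · rw [Set.indicator_of_mem hD]
    · rw [Set.indicator_of_notMem hD]
      simp only [hD_def, Set.mem_prod, Set.mem_Ioi, not_and_or, not_lt] at hD
      rcases hD with h | h
      · have : x < 0 := lt_of_le_of_ne h hz.1
        simp [hρ_def, gammaPDF_of_neg this]
      · have : y < 0 := lt_of_le_of_ne h hz.2
        simp [hρ_def, gammaPDF_of_neg this]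
  ext s hs
  rw [Measure.map_apply hcm hs, withDensity_apply _ (hcm hs), withDensity_apply _ hs]
  -- reduce to integral over D
  have hred : ∫⁻ z in c ⁻¹' s, ρ z = ∫⁻ z in c ⁻¹' s ∩ D, ρ z := by
    rw [lintegral_congr_ae (ae_restrict_of_ae hae), lintegral_indicator hDm,
      Measure.restrict_restrict hDm, Set.inter_comm]
  rw [hred, ← Tmap_image s]
  have hs' : MeasurableSet ((Set.Ioo (0:ℝ) 1 ∩ s) ×ˢ Set.Ioi (0:ℝ)) :=
    (measurableSet_Ioo.inter hs).prod measurableSet_Ioi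
  rw [lintegral_image_eq_lintegral_abs_det_fderiv_mul volume hs'
    (fun q _ => (hasFDerivAt_Tmap q).hasFDerivWithinAt)
    (Tmap_injOn.mono (Set.prod_mono Set.inter_subset_left le_rfl)) ρ]
  -- compute the integrand
  have hcongr : ∫⁻ q in (Set.Ioo (0:ℝ) 1 ∩ s) ×ˢ Set.Ioi (0:ℝ),
        ENNReal.ofReal |(Bder q).det| * ρ (Tmap q)
      = ∫⁻ q in (Set.Ioo (0:ℝ) 1 ∩ s) ×ˢ Set.Ioi (0:ℝ),
        ENNReal.ofReal (q.1 ^ (α - 1) * (1 - q.1) ^ (β - 1) / (Real.Gamma α * Real.Gamma β))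
          * ENNReal.ofReal (q.2 ^ (α + β - 1) * Real.exp (-q.2)) := by
    refine setLIntegral_congr_fun hs' ?_
    rintro ⟨t, u⟩ ⟨⟨⟨ht0, ht1⟩, hts⟩, hu⟩
    dsimp only at ht0 ht1 hu ⊢
    simp only [Set.mem_Ioi] at hu
    rw [Bder_det]
    dsimp only
    have h1t : (0:ℝ) < 1 - t := by linarith
    have hx1 : (0:ℝ) ≤ t * u := by positivity
    have hx2 : (0:ℝ) ≤ u - t * u := by nlinarith
    have hA : (0:ℝ) ≤ 1 ^ α / Real.Gamma α * (t * u) ^ (α - 1) * Real.exp (-(1 * (t * u))) := by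
      have := gammaPDFReal_nonneg hα one_pos (t * u)
      rwa [gammaPDFReal, if_pos hx1] at this
    have hB : (0:ℝ) ≤ 1 ^ β / Real.Gamma β * (u - t * u) ^ (β - 1)
        * Real.exp (-(1 * (u - t * u))) := by
      have := gammaPDFReal_nonneg hβ one_pos (u - t * u)
      rwa [gammaPDFReal, if_pos hx2] at this
    simp only [hρ_def, Tmap]
    rw [gammaPDF_of_nonneg hx1, gammaPDF_of_nonneg hx2, abs_of_pos hu, ← mul_assoc,
      ← ENNReal.ofReal_mul hu.le, ← ENNReal.ofReal_mul (mul_nonneg hu.le hA)]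
    have hΓ : (0:ℝ) < Real.Gamma α * Real.Gamma β :=
      mul_pos (Real.Gamma_pos_of_pos hα) (Real.Gamma_pos_of_pos hβ)
    have hC : (0:ℝ) ≤ t ^ (α - 1) * (1 - t) ^ (β - 1) / (Real.Gamma α * Real.Gamma β) :=
      div_nonneg (mul_nonneg (Real.rpow_nonneg ht0.le _) (Real.rpow_nonneg h1t.le _)) hΓ.le
    rw [← ENNReal.ofReal_mul hC]
    congr 1
    have e2 : u - t * u = (1 - t) * u := by ring
    have e1 : (t * u) ^ (α - 1) = t ^ (α - 1) * u ^ (α - 1) :=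
      Real.mul_rpow ht0.le hu.le
    have e3 : ((1 - t) * u) ^ (β - 1) = (1 - t) ^ (β - 1) * u ^ (β - 1) :=
      Real.mul_rpow h1t.le hu.le
    have e4 : Real.exp (-(1 * (t * u))) * Real.exp (-(1 * ((1 - t) * u))) = Real.exp (-u) := by
      rw [← Real.exp_add]; congr 1; ring
    have e5 : u ^ (α + β - 1) = u * (u ^ (α - 1) * u ^ (β - 1)) := by
      rw [← Real.rpow_add hu]
      have h6 := Real.rpow_add hu 1 (α - 1 + (β - 1))
      rw [Real.rpow_one] at h6
      rw [show α + β - 1 = 1 + (α - 1 + (β - 1)) by ring, h6]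
    simp only [Real.one_rpow]
    rw [e2, e1, e3, e5, ← e4]
    ring
  rw [hcongr]
  -- Tonelli
  have hm1 : Measurable fun t : ℝ =>
      ENNReal.ofReal (t ^ (α - 1) * (1 - t) ^ (β - 1) / (Real.Gamma α * Real.Gamma β)) := by
    fun_prop
  have hm2 : Measurable fun u : ℝ =>
      ENNReal.ofReal (u ^ (α + β - 1) * Real.exp (-u)) := by fun_prop
  rw [Measure.volume_eq_prod, ← Measure.prod_restrict,
    lintegral_prod_mul hm1.aemeasurable hm2.aemeasurable,
    gamma_lintegral (α + β) (by positivity)]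
  -- rewrite the RHS density as an indicator
  have hfun : (fun x : ℝ => ENNReal.ofReal
      (if x ∈ Set.Ioo (0:ℝ) 1 then
        Real.Gamma (α + β) / (Real.Gamma α * Real.Gamma β) * x ^ (α - 1) * (1 - x) ^ (β - 1)
      else 0))
      = (Set.Ioo (0:ℝ) 1).indicator (fun x => ENNReal.ofReal
          (Real.Gamma (α + β) / (Real.Gamma α * Real.Gamma β)
            * x ^ (α - 1) * (1 - x) ^ (β - 1))) := by
    funext x
    by_cases hx : x ∈ Set.Ioo (0:ℝ) 1 <;> simp [hx]
  rw [hfun, lintegral_indicator measurableSet_Ioo, Measure.restrict_restrict measurableSet_Ioo]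
  rw [mul_comm, ← lintegral_const_mul _ hm1]
  refine setLIntegral_congr_fun (measurableSet_Ioo.inter hs) ?_ |>.symm.symm
  intro t ht
  beta_reduce
  rw [← ENNReal.ofReal_mul (Real.Gamma_pos_of_pos (by positivity : (0:ℝ) < α + β)).le]
  congr 1
  ring
end

section
/- Let ν > 0. If Z₁ is distributed as Gamma(ν/2, 1) and Z₂ is a standard normal random variable N(0,1), with Z₁ and Z₂ independent, then T = √(ν/(2·Z₁))·Z₂ has density t ↦ (Γ((ν+1)/2)/(√(ν·π)·Γ(ν/2)))·(1 + t²/ν)^{−(ν+1)/2} with respect to Lebesgue measure on ℝ; i.e., T follows the Student's t-distribution with ν degrees of freedom. -/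
open MeasureTheory ProbabilityTheory

open scoped ENNReal NNReal

lemma my_lintegral_gamma {a b : ℝ} (ha : 0 < a) (hb : 0 < b) :
    ∫⁻ z in Set.Ioi (0:ℝ), ENNReal.ofReal (z ^ (a - 1) * Real.exp (-(b * z)))
      = ENNReal.ofReal ((1 / b) ^ a * Real.Gamma a) := by
  have hint := Real.integral_rpow_mul_exp_neg_mul_Ioi ha hb
  have hnn : 0 ≤ᵐ[volume.restrict (Set.Ioi (0:ℝ))]
      fun z => z ^ (a - 1) * Real.exp (-(b * z)) := by
    filter_upwards [ae_restrict_mem measurableSet_Ioi] with z hz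
    have : (0:ℝ) < z := hz
    positivity
  have hmeas : AEStronglyMeasurable (fun z : ℝ => z ^ (a - 1) * Real.exp (-(b * z)))
      (volume.restrict (Set.Ioi (0:ℝ))) :=
    (((measurable_id.pow_const _).mul
      ((measurable_id.const_mul b).neg.exp)).aestronglyMeasurable)
  have h1 : ∫ z in Set.Ioi (0:ℝ), z ^ (a - 1) * Real.exp (-(b * z))
      = (∫⁻ z in Set.Ioi (0:ℝ), ENNReal.ofReal (z ^ (a - 1) * Real.exp (-(b * z)))).toReal :=
    integral_eq_lintegral_of_nonneg_ae hnn hmeas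
  have hpos : 0 < (1 / b) ^ a * Real.Gamma a := by
    have := Real.Gamma_pos_of_pos ha
    positivity
  have hne : (∫⁻ z in Set.Ioi (0:ℝ), ENNReal.ofReal (z ^ (a - 1) * Real.exp (-(b * z)))) ≠ ⊤ := by
    intro h
    rw [h, hint, ENNReal.toReal_top] at h1
    linarith
  rw [← ENNReal.ofReal_toReal hne, ← h1, hint]

lemma my_pdf_mul (ν : ℝ) (hν : 0 < ν) {z : ℝ} (hz : 0 < z) {v : ℝ≥0}
    (hv : (v : ℝ) = ν / (2 * z)) (t : ℝ) :
    gammaPDF (ν / 2) 1 z * gaussianPDF 0 v t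
      = ENNReal.ofReal ((Real.Gamma (ν / 2) * Real.sqrt (ν * Real.pi))⁻¹
          * (z ^ ((ν + 1) / 2 - 1) * Real.exp (-((1 + t ^ 2 / ν) * z)))) := by
  have hΓ : 0 < Real.Gamma (ν / 2) := Real.Gamma_pos_of_pos (by linarith)
  have hπ : 0 < Real.pi := Real.pi_pos
  rw [gammaPDF_of_nonneg hz.le, gaussianPDF, ← ENNReal.ofReal_mul (by positivity)]
  congr 1
  rw [gaussianPDFReal, hv]
  have h2πv : 2 * Real.pi * (ν / (2 * z)) = Real.pi * ν / z := by field_simp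
  rw [h2πv, Real.sqrt_div (by positivity) z, Real.one_rpow, inv_div]
  have hexp : Real.exp (-(1 * z)) * Real.exp (-(t - 0) ^ 2 / (2 * (ν / (2 * z))))
      = Real.exp (-((1 + t ^ 2 / ν) * z)) := by
    rw [← Real.exp_add]
    congr 1
    field_simp
    ring
  have hzp : z ^ (ν / 2 - 1) * Real.sqrt z = z ^ ((ν + 1) / 2 - 1) := by
    rw [Real.sqrt_eq_rpow, ← Real.rpow_add hz]
    congr 1
    ring
  rw [mul_comm Real.pi ν] at *
  rw [← hexp, ← hzp]
  have h1 : Real.sqrt (ν * Real.pi) ≠ 0 := by positivity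
  field_simp

/-- If `Z₁ ~ Gamma(ν/2, 1)` and `Z₂ ~ N(0,1)` are independent, then
`T = √(ν/(2 Z₁)) · Z₂` follows the Student's t-distribution with `ν` degrees of freedom:
its density is `t ↦ Γ((ν+1)/2)/(√(νπ) Γ(ν/2)) (1 + t²/ν)^(-(ν+1)/2)`. -/
theorem stmt_9 (ν : ℝ) (hν : 0 < ν)
    {Ω : Type*} [MeasurableSpace Ω] (P : Measure Ω) [IsProbabilityMeasure P]
    (Z₁ Z₂ : Ω → ℝ)
    (h_indep : IndepFun Z₁ Z₂ P)
    (hZ₁ : Measure.map Z₁ P = gammaMeasure (ν / 2) 1)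
    (hZ₂ : Measure.map Z₂ P = gaussianReal 0 1) :
    Measure.map (fun ω => Real.sqrt (ν / (2 * Z₁ ω)) * Z₂ ω) P
      = volume.withDensity (fun t => ENNReal.ofReal
          (Real.Gamma ((ν + 1) / 2) / (Real.sqrt (ν * Real.pi) * Real.Gamma (ν / 2))
            * (1 + t ^ 2 / ν) ^ (-((ν + 1) / 2)))) := by
  have hν2 : (0:ℝ) < ν / 2 := by linarith
  have hμprob : IsProbabilityMeasure (gammaMeasure (ν / 2) 1) :=
    isProbabilityMeasure_gammaMeasure hν2 one_pos
  -- a.e.-measurability of Z₁ and Z₂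
  have hm1 : AEMeasurable Z₁ P := by
    by_contra h
    rw [Measure.map_of_not_aemeasurable h] at hZ₁
    have h0 : (0 : Measure ℝ) Set.univ = gammaMeasure (ν / 2) 1 Set.univ := by rw [hZ₁]
    simp [measure_univ] at h0
  have hm2 : AEMeasurable Z₂ P := by
    by_contra h
    rw [Measure.map_of_not_aemeasurable h] at hZ₂
    have h0 : (0 : Measure ℝ) Set.univ = gaussianReal 0 1 Set.univ := by rw [hZ₂]
    simp [measure_univ] at h0
  have hpair : Measure.map (fun ω => (Z₁ ω, Z₂ ω)) P
      = (gammaMeasure (ν / 2) 1).prod (gaussianReal 0 1) := by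
    rw [← hZ₁, ← hZ₂]
    exact (indepFun_iff_map_prod_eq_prod_map_map hm1 hm2).mp h_indep
  set G : ℝ × ℝ → ℝ := fun p => Real.sqrt (ν / (2 * p.1)) * p.2 with hGdef
  have hG : Measurable G :=
    (measurable_const.div (measurable_fst.const_mul 2)).sqrt.mul measurable_snd
  have hmapT : Measure.map (fun ω => Real.sqrt (ν / (2 * Z₁ ω)) * Z₂ ω) P
      = Measure.map G ((gammaMeasure (ν / 2) 1).prod (gaussianReal 0 1)) := by
    rw [← hpair,
      AEMeasurable.map_map_of_aemeasurable hG.aemeasurable (hm1.prodMk hm2)]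
    rfl
  rw [hmapT]
  refine Measure.ext fun s hs => ?_
  rw [withDensity_apply _ hs, Measure.map_apply hG hs, Measure.prod_apply (hG hs)]
  have hμdef : gammaMeasure (ν / 2) 1 = volume.withDensity (gammaPDF (ν / 2) 1) := rfl
  rw [hμdef, lintegral_withDensity_eq_lintegral_mul _
    (show Measurable (gammaPDF (ν / 2) 1) from (measurable_gammaPDFReal _ _).ennreal_ofReal)
    (measurable_measure_prodMk_left (hG hs))]
  simp only [Pi.mul_apply]
  rw [← lintegral_add_compl
    (fun z => gammaPDF (ν / 2) 1 z * (gaussianReal 0 1) (Prod.mk z ⁻¹' (G ⁻¹' s)))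
    measurableSet_Ioi]
  have hcompl : ∫⁻ z in (Set.Ioi (0:ℝ))ᶜ,
      gammaPDF (ν / 2) 1 z * (gaussianReal 0 1) (Prod.mk z ⁻¹' (G ⁻¹' s)) = 0 := by
    rw [Set.compl_Ioi,
      Measure.restrict_congr_set (MeasureTheory.Iio_ae_eq_Iic (a := (0:ℝ))).symm,
      setLIntegral_congr_fun measurableSet_Iio
        (fun z (hz : z < 0) => by rw [gammaPDF_of_neg hz, zero_mul]),
      lintegral_zero]
  rw [hcompl, add_zero]
  set F : ℝ → ℝ → ℝ≥0∞ := fun z t =>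
    ENNReal.ofReal ((Real.Gamma (ν / 2) * Real.sqrt (ν * Real.pi))⁻¹
      * (z ^ ((ν + 1) / 2 - 1) * Real.exp (-((1 + t ^ 2 / ν) * z)))) with hFdef
  have hmain : ∀ z ∈ Set.Ioi (0:ℝ),
      gammaPDF (ν / 2) 1 z * (gaussianReal 0 1) (Prod.mk z ⁻¹' (G ⁻¹' s))
        = ∫⁻ t in s, F z t := by
    intro z hz
    replace hz : (0:ℝ) < z := hz
    set c : ℝ := Real.sqrt (ν / (2 * z)) with hcdef
    have hc2 : c ^ 2 = ν / (2 * z) := Real.sq_sqrt (by positivity)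
    have hsect : Prod.mk z ⁻¹' (G ⁻¹' s) = (c * ·) ⁻¹' s := rfl
    rw [hsect, ← Measure.map_apply (measurable_const_mul c) hs,
      gaussianReal_map_const_mul c, mul_zero, mul_one]
    have hv : ((NNReal.mk (c ^ 2) (sq_nonneg c) : ℝ≥0) : ℝ) = ν / (2 * z) := by
      exact hc2
    have hvne : (NNReal.mk (c ^ 2) (sq_nonneg c) : ℝ≥0) ≠ 0 := by
      intro h
      rw [h] at hv
      have h2 : (0:ℝ) < ν / (2 * z) := by positivity
      rw [← hv] at h2
      exact lt_irrefl _ h2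
    rw [gaussianReal_apply _ hvne s, ← lintegral_const_mul _ (measurable_gaussianPDF _ _)]
    exact setLIntegral_congr_fun hs (fun t _ => my_pdf_mul ν hν hz hv t)
  rw [setLIntegral_congr_fun measurableSet_Ioi hmain]
  have hFm : Measurable (Function.uncurry F) := by
    apply Measurable.ennreal_ofReal
    exact measurable_const.mul ((measurable_fst.pow_const _).mul
      ((((measurable_const.add ((measurable_snd.pow_const 2).div_const ν)).mul
        measurable_fst).neg).exp))
  rw [lintegral_lintegral_swap hFm.aemeasurable]
  refine setLIntegral_congr_fun hs (fun t _ => ?_)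
  have hΓ : 0 < Real.Gamma (ν / 2) := Real.Gamma_pos_of_pos hν2
  have hπ : 0 < Real.pi := Real.pi_pos
  have hC : (0:ℝ) ≤ (Real.Gamma (ν / 2) * Real.sqrt (ν * Real.pi))⁻¹ := by positivity
  have hb : (0:ℝ) < 1 + t ^ 2 / ν := by positivity
  have ha : (0:ℝ) < (ν + 1) / 2 := by linarith
  calc ∫⁻ z in Set.Ioi (0:ℝ), F z t
      = ENNReal.ofReal ((Real.Gamma (ν / 2) * Real.sqrt (ν * Real.pi))⁻¹)
        * ∫⁻ z in Set.Ioi (0:ℝ), ENNReal.ofReal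
            (z ^ ((ν + 1) / 2 - 1) * Real.exp (-((1 + t ^ 2 / ν) * z))) := by
        rw [← lintegral_const_mul _ (by
          exact Measurable.ennreal_ofReal ((measurable_id.pow_const _).mul
            ((measurable_id.const_mul _).neg.exp)))]
        refine setLIntegral_congr_fun measurableSet_Ioi (fun z hz => ?_)
        rw [hFdef, ← ENNReal.ofReal_mul hC]
    _ = ENNReal.ofReal ((Real.Gamma (ν / 2) * Real.sqrt (ν * Real.pi))⁻¹)
        * ENNReal.ofReal ((1 / (1 + t ^ 2 / ν)) ^ ((ν + 1) / 2) * Real.Gamma ((ν + 1) / 2)) := by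
        rw [my_lintegral_gamma ha hb]
    _ = ENNReal.ofReal (Real.Gamma ((ν + 1) / 2)
          / (Real.sqrt (ν * Real.pi) * Real.Gamma (ν / 2))
          * (1 + t ^ 2 / ν) ^ (-((ν + 1) / 2))) := by
        rw [← ENNReal.ofReal_mul hC]
        congr 1
        rw [one_div, Real.inv_rpow hb.le, Real.rpow_neg hb.le]
        have hba : (1 + t ^ 2 / ν) ^ ((ν + 1) / 2) ≠ 0 := by
          exact (Real.rpow_pos_of_pos hb _).ne'
        rw [div_eq_mul_inv, mul_inv]
        ring
end

section
/- Let a > 0. If U is uniformly distributed on the interval (0,1], then X = √(a² − 2·log U) has density x ↦ x·e^{(a² − x²)/2} for x > a and 0 otherwise, with respect to Lebesgue measure on ℝ (this is the proposal distribution used for rejection sampling of the standard normal truncated to (a, ∞)). -/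
open MeasureTheory Set

/-- If `U ~ Uniform(0,1]`, then `X = √(a² - 2 log U)` has density
`x ↦ x e^((a² - x²)/2)` for `x > a` and `0` otherwise (the proposal distribution for
rejection sampling of the standard normal truncated to `(a, ∞)`). -/
theorem stmt_12 (a : ℝ) (ha : 0 < a) :
    Measure.map (fun u => Real.sqrt (a ^ 2 - 2 * Real.log u))
        (volume.restrict (Set.Ioc (0 : ℝ) 1))
      = volume.withDensity (fun x => ENNReal.ofReal
          (if a < x then x * Real.exp ((a ^ 2 - x ^ 2) / 2) else 0)) := by
  have hf : Measurable fun u : ℝ => Real.sqrt (a ^ 2 - 2 * Real.log u) :=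
    Real.continuous_sqrt.measurable.comp
      (measurable_const.sub (Real.measurable_log.const_mul 2))
  haveI : IsFiniteMeasure (volume.restrict (Set.Ioc (0 : ℝ) 1)) :=
    ⟨by simp [Real.volume_Ioc]⟩
  haveI : IsFiniteMeasure
      (Measure.map (fun u => Real.sqrt (a ^ 2 - 2 * Real.log u))
        (volume.restrict (Set.Ioc (0 : ℝ) 1))) :=
    Measure.isFiniteMeasure_map _ _
  refine Measure.ext_of_Iic _ _ fun b => ?_
  rw [Measure.map_apply hf measurableSet_Iic,
    withDensity_apply _ measurableSet_Iic,
    Measure.restrict_apply' measurableSet_Ioc]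
  rcases le_or_gt a b with hab | hab
  · set c : ℝ := Real.exp ((a ^ 2 - b ^ 2) / 2) with hc
    have hc0 : 0 < c := Real.exp_pos _
    have hc1 : c ≤ 1 := by
      rw [hc]
      refine Real.exp_le_one_iff.mpr (by nlinarith)
    have hset : (fun u => Real.sqrt (a ^ 2 - 2 * Real.log u)) ⁻¹' Iic b ∩ Ioc 0 1
        = Icc c 1 := by
      ext u
      simp only [mem_inter_iff, mem_preimage, mem_Iic, mem_Ioc, mem_Icc]
      constructor
      · rintro ⟨hle, hu0, hu1⟩
        rw [Real.sqrt_le_iff] at hle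
        have : (a ^ 2 - b ^ 2) / 2 ≤ Real.log u := by linarith [hle.2]
        rw [Real.le_log_iff_exp_le hu0] at this
        exact ⟨this, hu1⟩
      · rintro ⟨hcu, hu1⟩
        have hu0 : 0 < u := lt_of_lt_of_le hc0 hcu
        refine ⟨?_, hu0, hu1⟩
        have : (a ^ 2 - b ^ 2) / 2 ≤ Real.log u :=
          (Real.le_log_iff_exp_le hu0).mpr hcu
        have harg : a ^ 2 - 2 * Real.log u ≤ b ^ 2 := by linarith
        calc Real.sqrt (a ^ 2 - 2 * Real.log u) ≤ Real.sqrt (b ^ 2) :=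
              Real.sqrt_le_sqrt harg
          _ = b := Real.sqrt_sq (le_trans ha.le hab)
    rw [hset, Real.volume_Icc]
    -- now compute the density side
    have hint : ∫⁻ x in Iic b, ENNReal.ofReal
        (if a < x then x * Real.exp ((a ^ 2 - x ^ 2) / 2) else 0)
        = ∫⁻ x in Ioc a b, ENNReal.ofReal (x * Real.exp ((a ^ 2 - x ^ 2) / 2)) := by
      rw [setLIntegral_congr_fun measurableSet_Iic
        (fun x hx => ?_) (g := (Ioc a b).indicator
          (fun x => ENNReal.ofReal (x * Real.exp ((a ^ 2 - x ^ 2) / 2)))),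
        lintegral_indicator measurableSet_Ioc _, Measure.restrict_restrict measurableSet_Ioc,
        Set.inter_eq_self_of_subset_left (Ioc_subset_Iic_self)]
      by_cases h : a < x
      · rw [if_pos h, Set.indicator_of_mem (show x ∈ Ioc a b from ⟨h, hx⟩)]
      · rw [if_neg h, Set.indicator_of_notMem (fun hm => h hm.1), ENNReal.ofReal_zero]
    rw [hint]
    have hInt : IntegrableOn (fun x => x * Real.exp ((a ^ 2 - x ^ 2) / 2)) (Ioc a b) := by
      apply (Continuous.integrableOn_Ioc ?_)
      exact continuous_id.mul ((continuous_const.sub (continuous_pow 2)).div_const 2).rexp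
    have hnn : 0 ≤ᵐ[volume.restrict (Ioc a b)]
        fun x => x * Real.exp ((a ^ 2 - x ^ 2) / 2) := by
      filter_upwards [ae_restrict_mem measurableSet_Ioc] with x hx
      exact mul_nonneg (le_of_lt (lt_trans ha hx.1)) (Real.exp_pos _).le
    rw [← ofReal_integral_eq_lintegral_ofReal hInt hnn,
      ← intervalIntegral.integral_of_le hab]
    have hderiv : ∀ x ∈ Set.uIcc a b, HasDerivAt
        (fun x => -Real.exp ((a ^ 2 - x ^ 2) / 2))
        (x * Real.exp ((a ^ 2 - x ^ 2) / 2)) x := by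
      intro x _
      have hg : HasDerivAt (fun x : ℝ => (a ^ 2 - x ^ 2) / 2) (-x) x := by
        have := (((hasDerivAt_pow 2 x).const_sub (a ^ 2)).div_const 2)
        simpa using this.congr_deriv (by ring)
      have := (hg.exp).neg
      exact this.congr_deriv (by ring)
    rw [intervalIntegral.integral_eq_sub_of_hasDerivAt hderiv
      (intervalIntegrable_iff.mpr (by rw [Set.uIoc_of_le hab]; exact hInt))]
    simp only [neg_sub_neg]
    norm_num [hc]
  · -- b < a : both sides are zero
    have hset : (fun u => Real.sqrt (a ^ 2 - 2 * Real.log u)) ⁻¹' Iic b ∩ Ioc 0 1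
        = (∅ : Set ℝ) := by
      ext u
      simp only [mem_inter_iff, mem_preimage, mem_Iic, mem_Ioc, mem_empty_iff_false,
        iff_false, not_and]
      intro hle hu0 hu1
      have hlog : Real.log u ≤ 0 := Real.log_nonpos hu0.le hu1
      have : a ≤ Real.sqrt (a ^ 2 - 2 * Real.log u) := by
        calc a = Real.sqrt (a ^ 2) := (Real.sqrt_sq ha.le).symm
          _ ≤ _ := Real.sqrt_le_sqrt (by linarith)
      linarith
    rw [hset, measure_empty]
    rw [setLIntegral_congr_fun measurableSet_Iic
      (fun x hx => ?_) (g := fun _ => (0 : ENNReal)), lintegral_zero]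
    rw [if_neg (by simp only [mem_Iic] at hx; linarith), ENNReal.ofReal_zero]
end

section
/- Fix ε ∈ ℝ. Then, as α → ∞, the density of the accepted sample of the Marsaglia–Tsang rejection sampler converges pointwise to the standard normal density: lim_{α→∞} q(h(ε,α); α)·(∂h/∂ε)(ε,α) = e^{−ε²/2}/√(2π), where (∂h/∂ε)(ε, α) = 3·(α − 1/3)·(1 + ε/√(9α − 3))²/√(9α − 3). -/
open Filter Real Topology

lemma mylog_bound {t : ℝ} (ht : |t| ≤ 1/2) : |Real.log (1+t) - t + t^2/2| ≤ 2*|t|^3 := by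
  have h : |(-t)| < 1 := by rw [abs_neg]; linarith
  have key := Real.abs_log_sub_add_sum_range_le h 2
  simp [Finset.sum_range_succ] at key
  have h1 : |-t + t ^ 2 / (1 + 1) + Real.log (1 + t)| = |Real.log (1+t) - t + t^2/2| := by
    congr 1; ring
  rw [h1] at key
  have h2 : |t|^3 / (1 - |t|) ≤ 2*|t|^3 := by
    rw [div_le_iff₀ (by linarith [abs_nonneg t])]
    nlinarith [pow_nonneg (abs_nonneg t) 3, abs_nonneg t]
  linarith

lemma mylog_lower {x : ℝ} (hx : 0 < x) : 1 - 1/x ≤ Real.log x := by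
  have := Real.log_le_sub_one_of_pos (show (0:ℝ) < 1/x by positivity)
  rw [Real.log_div one_ne_zero (ne_of_gt hx), Real.log_one] at this
  linarith

noncomputable def dfun (n : ℕ) : ℝ :=
  Real.log n.factorial - ((n + 1/2) * Real.log n - n + (1/2) * Real.log (2*Real.pi))

lemma hd : Tendsto dfun atTop (𝓝 0) := by
  have h1 : Tendsto (fun n => Real.log (Stirling.stirlingSeq n)) atTop (𝓝 (Real.log (Real.sqrt Real.pi))) :=
    (Real.continuousAt_log (by positivity)).tendsto.comp Stirling.tendsto_stirlingSeq_sqrt_pi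
  have h2 : ∀ᶠ n : ℕ in atTop, Real.log (Stirling.stirlingSeq n) - Real.log (Real.sqrt Real.pi) = dfun n := by
    filter_upwards [eventually_ge_atTop 1] with n hn
    have hn0 : (0:ℝ) < n := by exact_mod_cast hn
    have hfac : (0:ℝ) < n.factorial := by exact_mod_cast n.factorial_pos
    have hne : Real.sqrt (2*n) * ((n : ℝ) / Real.exp 1) ^ n ≠ 0 := by positivity
    rw [Stirling.stirlingSeq, Real.log_div (ne_of_gt hfac) hne,
      Real.log_mul (by positivity) (by positivity), Real.log_pow,
      Real.log_div (ne_of_gt hn0) (Real.exp_ne_zero 1), Real.log_exp,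
      Real.log_sqrt (by positivity), Real.log_mul two_ne_zero (ne_of_gt hn0),
      Real.log_sqrt Real.pi_pos.le, dfun,
      Real.log_mul two_ne_zero (ne_of_gt Real.pi_pos)]
    ring
  have := (h1.sub tendsto_const_nhds).congr' h2
  simpa using this

lemma wendel_upper {x s : ℝ} (hx : 1 ≤ x) (hs0 : 0 ≤ s) (hs1 : s < 1) :
    Real.log (Real.Gamma (x + s)) ≤ Real.log (Real.Gamma x) + s * Real.log x := by
  have hx0 : (0:ℝ) < x := by linarith
  have h := Real.convexOn_log_Gamma.2 (Set.mem_Ioi.mpr hx0)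
    (Set.mem_Ioi.mpr (show (0:ℝ) < x + 1 by linarith))
    (show (0:ℝ) ≤ 1 - s by linarith) hs0 (by ring)
  simp only [smul_eq_mul, Function.comp_apply] at h
  have hpt : (1-s) * x + s * (x+1) = x + s := by ring
  rw [hpt] at h
  have hG1 : Real.Gamma (x+1) = x * Real.Gamma x := Real.Gamma_add_one (ne_of_gt hx0)
  rw [hG1, Real.log_mul (ne_of_gt hx0) (ne_of_gt (Real.Gamma_pos_of_pos hx0))] at h
  nlinarith [h]

-- lower: log Γ x + log x ≤ log Γ (x+s) + (1-s) log (x+s)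

lemma wendel_lower {x s : ℝ} (hx : 1 ≤ x) (hs0 : 0 ≤ s) (hs1 : s < 1) :
    Real.log (Real.Gamma x) + Real.log x ≤ Real.log (Real.Gamma (x + s)) + (1 - s) * Real.log (x + s) := by
  have hx0 : (0:ℝ) < x := by linarith
  have hxs : (0:ℝ) < x + s := by linarith
  have h := Real.convexOn_log_Gamma.2 (Set.mem_Ioi.mpr hxs)
    (Set.mem_Ioi.mpr (show (0:ℝ) < x + s + 1 by linarith))
    hs0 (show (0:ℝ) ≤ 1 - s by linarith) (by ring)
  simp only [smul_eq_mul, Function.comp_apply] at h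
  have hpt : s * (x+s) + (1-s) * (x+s+1) = x + 1 := by ring
  rw [hpt] at h
  rw [Real.Gamma_add_one (ne_of_gt hx0),
    Real.log_mul (ne_of_gt hx0) (ne_of_gt (Real.Gamma_pos_of_pos hx0))] at h
  rw [Real.Gamma_add_one (ne_of_gt hxs),
    Real.log_mul (ne_of_gt hxs) (ne_of_gt (Real.Gamma_pos_of_pos hxs))] at h
  nlinarith [h]

noncomputable def Sfun (α : ℝ) : ℝ :=
  Real.log (Real.Gamma α) - ((α - 1/2) * Real.log α - α + (1/2) * Real.log (2*Real.pi))

lemma S_bounds {α : ℝ} (hα : 2 ≤ α) :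
    dfun ⌊α⌋₊ - 1/(⌊α⌋₊:ℝ) ≤ Sfun α ∧ Sfun α ≤ dfun ⌊α⌋₊ + 1/(⌊α⌋₊:ℝ) := by
  set n := ⌊α⌋₊ with hn
  have hα0 : (0:ℝ) < α := by linarith
  have hn2 : 2 ≤ n := Nat.le_floor (by exact_mod_cast hα)
  have hnr2 : (2:ℝ) ≤ (n:ℝ) := by exact_mod_cast hn2
  have hn0 : (0:ℝ) < (n:ℝ) := by linarith
  have hnα : (n:ℝ) ≤ α := Nat.floor_le hα0.le
  have hαn1 : α < (n:ℝ) + 1 := Nat.lt_floor_add_one α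
  have hs0 : (0:ℝ) ≤ α - n := by linarith
  have hs1 : α - (n:ℝ) < 1 := by linarith
  have hns : (n:ℝ) + (α - n) = α := by ring
  -- log Γ n = log n! - log n
  have hfac : Real.Gamma ((n:ℝ) + 1) = n.factorial := by
    exact_mod_cast Real.Gamma_nat_eq_factorial n
  have hΓrec : Real.Gamma ((n:ℝ) + 1) = (n:ℝ) * Real.Gamma n := Real.Gamma_add_one (ne_of_gt hn0)
  have hΓpos : 0 < Real.Gamma (n:ℝ) := Real.Gamma_pos_of_pos hn0
  have hΓn : Real.log (Real.Gamma (n:ℝ)) = Real.log n.factorial - Real.log n := by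
    have : (n.factorial : ℝ) = (n:ℝ) * Real.Gamma n := by rw [← hfac, hΓrec]
    rw [this, Real.log_mul (ne_of_gt hn0) (ne_of_gt hΓpos)]; ring
  -- log estimates
  have hlogd : Real.log α - Real.log (n:ℝ) = Real.log (α / n) := by
    rw [Real.log_div (ne_of_gt hα0) (ne_of_gt hn0)]
  have hup : Real.log α - Real.log (n:ℝ) ≤ (α - n)/n := by
    rw [hlogd]
    have := Real.log_le_sub_one_of_pos (show (0:ℝ) < α/n by positivity)
    have h2 : α/(n:ℝ) - 1 = (α - n)/n := by field_simp
    linarith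
  have hlo : (α - (n:ℝ))/α ≤ Real.log α - Real.log (n:ℝ) := by
    rw [hlogd]
    have := mylog_lower (show (0:ℝ) < α/n by positivity)
    have h2 : 1 - 1/(α/(n:ℝ)) = (α - n)/α := by
      rw [one_div_div]; field_simp
    linarith
  constructor
  · -- lower bound, from wendel_lower
    have hw := wendel_lower (x := (n:ℝ)) (by linarith) hs0 hs1
    rw [hns, hΓn] at hw
    -- (n+1/2)(log n - log α) ≥ -(n+1/2)(α-n)/n
    have h1 : ((n:ℝ)+1/2) * (Real.log (n:ℝ) - Real.log α) ≥ ((n:ℝ)+1/2) * (-((α - n)/n)) := by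
      apply mul_le_mul_of_nonneg_left (by linarith) (by linarith)
    have h2 : ((n:ℝ)+1/2) * (-((α - n)/n)) + (α - n) ≥ -(1/(n:ℝ)) := by
      have he : ((n:ℝ)+1/2) * (-((α - n)/n)) + (α - n) = -((α-n)/(2*n)) := by
        field_simp; ring
      rw [he]
      have : (α - n)/(2*n) ≤ 1/n := by
        rw [div_le_div_iff₀ (by linarith) hn0]; nlinarith
      linarith
    simp only [Sfun, dfun]
    linarith [hw, h1, h2]
  · have hw := wendel_upper (x := (n:ℝ)) (by linarith) hs0 hs1
    rw [hns, hΓn] at hw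
    have h1 : (α - 1/2) * (Real.log (n:ℝ) - Real.log α) ≤ (α - 1/2) * (-((α - n)/α)) := by
      apply mul_le_mul_of_nonneg_left (by linarith) (by linarith)
    have h2 : (α - 1/2) * (-((α - n)/α)) + (α - n) ≤ 1/(n:ℝ) := by
      have he : (α - 1/2) * (-((α - n)/α)) + (α - n) = (α-n)/(2*α) := by
        field_simp; ring
      rw [he]
      have : (α - n)/(2*α) ≤ 1/n := by
        rw [div_le_div_iff₀ (by linarith) hn0]; nlinarith
      linarith
    simp only [Sfun, dfun]
    linarith [hw, h1, h2]

lemma hS : Tendsto Sfun atTop (𝓝 0) := by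
  have hfloor : Tendsto (fun α : ℝ => ⌊α⌋₊) atTop atTop := tendsto_nat_floor_atTop
  have h1 : Tendsto (fun α : ℝ => dfun ⌊α⌋₊ - 1/(⌊α⌋₊:ℝ)) atTop (𝓝 0) := by
    have := (hd.sub tendsto_one_div_atTop_nhds_zero_nat).comp hfloor
    simpa [Function.comp_def] using this
  have h2 : Tendsto (fun α : ℝ => dfun ⌊α⌋₊ + 1/(⌊α⌋₊:ℝ)) atTop (𝓝 0) := by
    have := (hd.add tendsto_one_div_atTop_nhds_zero_nat).comp hfloor
    simpa [Function.comp_def] using this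
  refine tendsto_of_tendsto_of_tendsto_of_le_of_le' h1 h2 ?_ ?_
  · filter_upwards [eventually_ge_atTop (2:ℝ)] with α hα using (S_bounds hα).1
  · filter_upwards [eventually_ge_atTop (2:ℝ)] with α hα using (S_bounds hα).2

lemma hW : Tendsto (fun α : ℝ => (α - 1/2) * Real.log ((α - 1/3)/α)) atTop (𝓝 (-(1/3))) := by
  have h1 : Tendsto (fun α : ℝ => α * Real.log (1 + (-(1/3))/α)) atTop (𝓝 (-(1/3))) :=
    Real.tendsto_mul_log_one_add_div_atTop (-(1/3))
  have h2 : Tendsto (fun α : ℝ => Real.log (1 + (-(1/3))/α)) atTop (𝓝 0) := by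
    have : Tendsto (fun α : ℝ => 1 + (-(1/3))/α) atTop (𝓝 1) := by
      have := ((tendsto_inv_atTop_zero (𝕜 := ℝ)).const_mul (-(1/3))).const_add 1
      simp only [div_eq_mul_inv]
      simpa using this
    have := (Real.continuousAt_log one_ne_zero).tendsto.comp this
    simpa [Function.comp_def] using this
  have h3 : Tendsto (fun α : ℝ => α * Real.log (1 + (-(1/3))/α) - (1/2) * Real.log (1 + (-(1/3))/α))
      atTop (𝓝 (-(1/3))) := by
    have := h1.sub (h2.const_mul (1/2))
    simpa using this
  apply h3.congr'
  filter_upwards [eventually_gt_atTop (0:ℝ)] with α hα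
  have : 1 + (-(1/3))/α = (α - 1/3)/α := by field_simp; ring
  rw [this]; ring

lemma hg (ε : ℝ) : Tendsto (fun α : ℝ =>
    3*(α-1/3)*Real.log (1+ε/Real.sqrt (9*α-3))
      - (α-1/3)*(1+ε/Real.sqrt (9*α-3))^3 + (α-1/3)) atTop (𝓝 (-(ε^2)/2)) := by
  set t : ℝ → ℝ := fun α => ε/Real.sqrt (9*α-3) with htdef
  have hsq : Tendsto Real.sqrt atTop atTop := by
    refine tendsto_atTop.2 fun b => ?_
    filter_upwards [eventually_ge_atTop ((max b 0)^2)] with x hx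
    calc b ≤ max b 0 := le_max_left b 0
      _ = Real.sqrt ((max b 0)^2) := (Real.sqrt_sq (le_max_right b 0)).symm
      _ ≤ Real.sqrt x := Real.sqrt_le_sqrt hx
  have hcat : Tendsto (fun α : ℝ => Real.sqrt (9*α-3)) atTop atTop := by
    apply hsq.comp
    apply tendsto_atTop_add_const_right
    exact (tendsto_id (α := ℝ)).const_mul_atTop (by norm_num)
  have ht : Tendsto t atTop (𝓝 0) := tendsto_const_nhds.div_atTop hcat
  -- eventual facts
  have hev : ∀ᶠ α : ℝ in atTop, (α - 1/3) * (t α)^2 = ε^2/9 ∧ |t α| ≤ 1/2 ∧ 0 < α - 1/3 := by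
    filter_upwards [eventually_ge_atTop (ε^2 + 1)] with α hα
    have hε2 : 0 ≤ ε^2 := sq_nonneg ε
    have h9 : (0:ℝ) < 9*α - 3 := by nlinarith
    have hc0 : 0 < Real.sqrt (9*α-3) := Real.sqrt_pos.mpr h9
    have hc2 : (Real.sqrt (9*α-3))^2 = 9*α-3 := Real.sq_sqrt h9.le
    refine ⟨?_, ?_, by nlinarith⟩
    · simp only [htdef]
      rw [div_pow]
      rw [hc2]
      rw [mul_div_assoc', div_eq_div_iff h9.ne' (by norm_num)]
      ring
    · simp only [htdef]
      rw [abs_div, abs_of_pos hc0, div_le_iff₀ hc0]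
      rw [show (1:ℝ)/2 * Real.sqrt (9*α-3) = Real.sqrt (9*α-3)/2 by ring]
      rw [le_div_iff₀ (by norm_num : (0:ℝ) < 2)]
      have : (2*|ε|)^2 ≤ (Real.sqrt (9*α-3))^2 := by
        rw [hc2]; rw [mul_pow, sq_abs]; nlinarith
      nlinarith [abs_nonneg ε, hc0]
  -- the squeeze part
  have hu : Tendsto (fun α : ℝ =>
      3*(α-1/3)*(Real.log (1+t α) - t α + (t α)^2/2)) atTop (𝓝 0) := by
    apply squeeze_zero_norm' (a := fun α => (2*ε^2/3) * |t α|)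
    · filter_upwards [hev] with α ⟨h1, h2, h3⟩
      have hb := mylog_bound h2
      rw [Real.norm_eq_abs, abs_mul]
      have : |3*(α-1/3)| = 3*(α-1/3) := abs_of_pos (by linarith)
      rw [this]
      calc 3*(α-1/3) * |Real.log (1+t α) - t α + (t α)^2/2|
          ≤ 3*(α-1/3) * (2*|t α|^3) := by
            apply mul_le_mul_of_nonneg_left hb (by linarith)
        _ = 6 * ((α-1/3) * (t α)^2) * |t α| := by
            rw [show |t α|^3 = (t α)^2 * |t α| by rw [← sq_abs]; ring]
            ring
        _ = (2*ε^2/3) * |t α| := by rw [h1]; ring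
    · have := (ht.abs.const_mul (2*ε^2/3))
      simpa using this
  have hmain : Tendsto (fun α : ℝ =>
      3*(α-1/3)*(Real.log (1+t α) - t α + (t α)^2/2) - ε^2/2 - (ε^2/9) * t α)
      atTop (𝓝 (-(ε^2)/2)) := by
    have := (hu.sub (tendsto_const_nhds (x := (ε^2/2:ℝ)))).sub (ht.const_mul (ε^2/9))
    simp only [htdef] at this ⊢
    convert this using 2 <;> ring
  apply hmain.congr'
  filter_upwards [hev] with α ⟨h1, h2, h3⟩
  linear_combination ((9:ℝ)/2 + t α) * h1

/-- As `α → ∞`, the density of the accepted sample of the Marsaglia–Tsang rejection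
sampler converges pointwise to the standard normal density:
`q(h(ε,α); α) · ∂h/∂ε(ε,α) → e^(-ε²/2)/√(2π)`, where
`h(ε,α) = (α - 1/3)(1 + ε/√(9α-3))³`,
`∂h/∂ε(ε,α) = 3(α-1/3)(1 + ε/√(9α-3))²/√(9α-3)`, and
`q(z;α) = z^(α-1) e^(-z)/Γ(α)` for `z > 0` (and `0` otherwise). -/
theorem stmt_16 (ε : ℝ) :
    Tendsto
      (fun α : ℝ =>
        (if 0 < (α - 1 / 3) * (1 + ε / Real.sqrt (9 * α - 3)) ^ 3 then
          ((α - 1 / 3) * (1 + ε / Real.sqrt (9 * α - 3)) ^ 3) ^ (α - 1)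
            * Real.exp (-((α - 1 / 3) * (1 + ε / Real.sqrt (9 * α - 3)) ^ 3))
            / Real.Gamma α
        else 0)
          * (3 * (α - 1 / 3) * (1 + ε / Real.sqrt (9 * α - 3)) ^ 2
              / Real.sqrt (9 * α - 3)))
      atTop
      (nhds (Real.exp (-(ε ^ 2) / 2) / Real.sqrt (2 * Real.pi))) := by
  set G : ℝ → ℝ := fun α => -Sfun α + (α - 1/2) * Real.log ((α - 1/3)/α)
    + (3*(α-1/3)*Real.log (1+ε/Real.sqrt (9*α-3))
      - (α-1/3)*(1+ε/Real.sqrt (9*α-3))^3 + (α-1/3))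
    + (1/3 - (1/2) * Real.log (2*Real.pi)) with hGdef
  have hG : Tendsto G atTop (𝓝 (-(ε^2)/2 - (1/2) * Real.log (2*Real.pi))) := by
    have := ((hS.neg.add hW).add (hg ε)).add
      (tendsto_const_nhds (x := (1/3 - (1/2) * Real.log (2*Real.pi) : ℝ)))
    rw [hGdef]
    convert this using 2
    ring
  have hexp : Tendsto (fun α => Real.exp (G α)) atTop
      (𝓝 (Real.exp (-(ε^2)/2 - (1/2) * Real.log (2*Real.pi)))) :=
    (Real.continuous_exp.tendsto _).comp hG
  have htarget : Real.exp (-(ε^2)/2 - (1/2) * Real.log (2*Real.pi))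
      = Real.exp (-(ε ^ 2) / 2) / Real.sqrt (2 * Real.pi) := by
    rw [Real.exp_sub]
    congr 1
    rw [show (1/2) * Real.log (2*Real.pi) = Real.log (2*Real.pi) / 2 by ring,
      ← Real.log_sqrt (by positivity), Real.exp_log (by positivity)]
  rw [← htarget]
  apply hexp.congr'
  filter_upwards [eventually_ge_atTop (2:ℝ), eventually_ge_atTop (ε^2+1)] with α hα2 hαε
  -- notation
  set c := Real.sqrt (9*α-3) with hcdef
  set x := 1 + ε/c with hxdef
  set β := α - 1/3 with hβdef
  have hα0 : (0:ℝ) < α := by linarith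
  have hβ0 : (0:ℝ) < β := by rw [hβdef]; linarith
  have h9 : (0:ℝ) < 9*α - 3 := by linarith
  have hc0 : 0 < c := Real.sqrt_pos.mpr h9
  have hc2 : c^2 = 9*α - 3 := Real.sq_sqrt h9.le
  have hεc : |ε/c| ≤ 1/2 := by
    rw [abs_div, abs_of_pos hc0, div_le_iff₀ hc0]
    nlinarith [abs_nonneg ε, sq_abs ε, sq_nonneg ε, hc0]
  have hx0 : 0 < x := by
    have := abs_le.mp hεc
    rw [hxdef]; linarith [this.1]
  have hh0 : 0 < β * x^3 := by positivity
  have hΓ0 : 0 < Real.Gamma α := Real.Gamma_pos_of_pos hα0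
  -- c = 3 √β
  have hc3 : c = 3 * Real.sqrt β := by
    rw [hcdef, hβdef, show 9*α-3 = 9*(α-1/3) by ring,
      Real.sqrt_mul (by norm_num : (0:ℝ) ≤ 9),
      show (9:ℝ) = 3^2 by norm_num, Real.sqrt_sq (by norm_num : (0:ℝ) ≤ 3)]
  have hsβ : 0 < Real.sqrt β := Real.sqrt_pos.mpr hβ0
  -- log identities
  have l1 : Real.log (β * x^3) = Real.log β + 3 * Real.log x := by
    rw [Real.log_mul (ne_of_gt hβ0) (by positivity), Real.log_pow]
    norm_num
  have l2 : Real.log (3 * β * x^2 / c) = (1/2) * Real.log β + 2 * Real.log x := by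
    have : 3 * β * x^2 / c = Real.sqrt β * x^2 := by
      have hkey : Real.sqrt β * Real.sqrt β = β := Real.mul_self_sqrt hβ0.le
      rw [hc3, div_eq_iff (by positivity : (3 : ℝ) * Real.sqrt β ≠ 0)]
      linear_combination (-(3 * x^2)) * hkey
    rw [this, Real.log_mul (ne_of_gt hsβ) (by positivity), Real.log_pow,
      Real.log_sqrt hβ0.le]
    norm_num
    ring
  have l3 : Real.log (β/α) = Real.log β - Real.log α :=
    Real.log_div (ne_of_gt hβ0) (ne_of_gt hα0)
  have hGid : G α = (α-1) * Real.log (β * x^3) - β * x^3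
      - Real.log (Real.Gamma α) + Real.log (3 * β * x^2 / c) := by
    rw [hGdef]
    simp only
    rw [l1, l2, l3, Sfun, hβdef]
    ring
  -- now compute
  have hite : (0:ℝ) < (α - 1/3) * (1 + ε/Real.sqrt (9*α-3))^3 := hh0
  rw [if_pos hite]
  have e1 : ((α - 1/3) * (1 + ε/Real.sqrt (9*α-3))^3) ^ (α-1)
      = Real.exp ((α-1) * Real.log (β * x^3)) := by
    rw [Real.rpow_def_of_pos hh0]; ring_nf
  rw [e1, hGid, Real.exp_add, Real.exp_sub, Real.exp_sub,
    Real.exp_log hΓ0, Real.exp_log (by positivity : (0:ℝ) < 3 * β * x^2 / c),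
    Real.exp_neg]
  ring
end
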